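/- arXiv:1911.00404 — 6 statements merged into one kernel-verified Lean document; each statement's English description precedes it below -/
import Mathlib

section
/- For every k ≥ 0 the alternating minimization iterates satisfy H^k − H* ≤ [(1 − σβ₁/L₁)(1 − σβ₂/L₂)]^k (H⁰ − H*). -/
/-!
One sweep contracts the gap `H - H*` by one factor per block. For the first block, with
`a = x^k`, `x̄` its projection onto `X` and `t = σβ₁/L₁ ∈ [0, 1]`, the new iterate is no worse
than the point `a₁ + t (x̄₁ - a₁)`. The block descent inequality and convexity of `g₁` bound
its value by `H(a) + t (⟨∇₁f(a), x̄₁ - a₁⟩ + g₁(x̄₁) - g₁(a₁)) + (L₁ t² / 2) ‖x̄₁ - a₁‖²`.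
Quasi-strong convexity, with `β₁ ‖x̄₁ - a₁‖² ≤ ‖a - x̄‖²`, pays for the `∇₁f` term and the
quadratic term; the `∇₂f` term it leaves behind is controlled by the first-order optimality of
`a₂` for the second block, `g₂(a₂) - g₂(x̄₂) ≤ ⟨∇₂f(a), x̄₂ - a₂⟩`. Altogether
`H(x₁^{k+1}, a₂) - H* ≤ (1 - t) (H(a) - H*)`, and the second block is symmetric.
-/

open Set

/-- The composite objective function `H(x₁,x₂) = f(x₁,x₂) + g₁(x₁) + g₂(x₂)`. -/
noncomputable def objFun {B₁ B₂ : Type*} (f : B₁ × B₂ → ℝ) (g₁ : B₁ → ℝ) (g₂ : B₂ → ℝ)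
    (x : B₁ × B₂) : ℝ :=
  f x + g₁ x.1 + g₂ x.2

section Convexity

variable {E : Type*} [AddCommGroup E] [Module ℝ E] {S : Set E} {g : E → ℝ} {x y : E}

theorem ConvexOn.le_add_smul_sub (hg : ConvexOn ℝ S g) (hx : x ∈ S) (hy : y ∈ S) {t : ℝ}
    (ht₀ : 0 ≤ t) (ht₁ : t ≤ 1) : g (x + t • (y - x)) ≤ g x + t * (g y - g x) := by
  have h := hg.2 hx hy (sub_nonneg.2 ht₁) ht₀ (sub_add_cancel 1 t)
  have hz : x + t • (y - x) = (1 - t) • x + t • y := by module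
  rw [hz]
  simp only [smul_eq_mul] at h
  linarith

end Convexity

section FirstOrder

variable {E : Type*} [NormedAddCommGroup E] [NormedSpace ℝ E] {S : Set E} {φ g : E → ℝ}
  {D : E →L[ℝ] ℝ} {x y : E}

theorem IsMinOn.sub_le_of_hasFDerivWithinAt (hmin : IsMinOn (φ + g) S x)
    (hφ : HasFDerivWithinAt φ D S x) (hg : ConvexOn ℝ S g) (hx : x ∈ S) (hy : y ∈ S) :
    g x - g y ≤ D (y - x) := by
  set γ : ℝ → E := fun s => x + s • (y - x)
  have hγS : MapsTo γ (Icc 0 1) S := fun s hs => hg.1.add_smul_sub_mem hx hy hs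
  have hγ : HasDerivAt γ (y - x) 0 := by
    simpa only [one_smul] using ((hasDerivAt_id' (0 : ℝ)).smul_const (y - x)).const_add x
  have hψ : HasDerivWithinAt (fun s => φ (γ s) + s * (g y - g x)) (D (y - x) + (g y - g x))
      (Icc 0 1) 0 :=
    (hφ.comp_hasDerivWithinAt_of_eq 0 hγ.hasDerivWithinAt hγS (by simp [γ])).add
      (by simpa using (hasDerivAt_mul_const (g y - g x)).hasDerivWithinAt)
  -- `g` lies below its chord on the segment, so `ψ` is minimal at `0`
  have hψmin : IsLocalMinOn (fun s => φ (γ s) + s * (g y - g x)) (Icc 0 1) 0 := by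
    refine IsMinOn.localize (isMinOn_iff.2 fun s hs => ?_)
    have h₁ := isMinOn_iff.1 hmin (γ s) (hγS hs)
    have h₂ := hg.le_add_smul_sub hx hy hs.1 hs.2
    simp only [Pi.add_apply, γ, zero_smul, add_zero, zero_mul] at h₁ h₂ ⊢
    linarith
  have h₁ : (1 : ℝ) ∈ posTangentConeAt (Icc (0 : ℝ) 1) 0 :=
    mem_posTangentConeAt_of_segment_subset (by simp [segment_eq_Icc])
  have := hψmin.hasFDerivWithinAt_nonneg hψ.hasFDerivWithinAt h₁
  rw [ContinuousLinearMap.toSpanSingleton_apply, one_smul] at this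
  linarith

theorem IsMinOn.add_le_of_descent {b : E} {L t : ℝ} (hmin : IsMinOn (φ + g) S b)
    (hdesc : ∀ h, x + h ∈ S → φ (x + h) ≤ φ x + D h + L / 2 * ‖h‖ ^ 2)
    (hg : ConvexOn ℝ S g) (hx : x ∈ S) (hy : y ∈ S) (ht₀ : 0 ≤ t) (ht₁ : t ≤ 1) :
    φ b + g b ≤ φ x + g x + t * (D (y - x) + g y - g x) + L / 2 * t ^ 2 * ‖y - x‖ ^ 2 := by
  have hz : x + t • (y - x) ∈ S := hg.1.add_smul_sub_mem hx hy ⟨ht₀, ht₁⟩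
  have h₁ := isMinOn_iff.1 hmin _ hz
  have h₂ := hdesc _ hz
  have h₃ := hg.le_add_smul_sub hx hy ht₀ ht₁
  rw [map_smul, norm_smul, Real.norm_of_nonneg ht₀, smul_eq_mul, mul_pow] at h₂
  simp only [Pi.add_apply] at h₁
  linarith

end FirstOrder

section Blocks

variable {B₁ B₂ : Type*} [NormedAddCommGroup B₁] [NormedSpace ℝ B₁]
  [NormedAddCommGroup B₂] [NormedSpace ℝ B₂] {f : B₁ × B₂ → ℝ} {D : (B₁ × B₂) →L[ℝ] ℝ}
  {g₁ : B₁ → ℝ} {g₂ : B₂ → ℝ} {S₁ : Set B₁} {S₂ : Set B₂} {a z : B₁ × B₂} {L σ β n : ℝ}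

theorem objFun_snd_optimality {y₂ : B₂} (hg₂ : ConvexOn ℝ S₂ g₂) (ha : a ∈ S₁ ×ˢ S₂)
    (hf : HasFDerivWithinAt f D (S₁ ×ˢ S₂) a)
    (ha₂ : ∀ y₂ ∈ S₂, objFun f g₁ g₂ a ≤ objFun f g₁ g₂ (a.1, y₂)) (hy₂ : y₂ ∈ S₂) :
    g₂ a.2 - g₂ y₂ ≤ D (0, y₂ - a.2) := by
  have hmin : IsMinOn ((fun y₂ => f (a.1, y₂)) + g₂) S₂ a.2 := isMinOn_iff.2 fun y₂ hy₂ => by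
    have := ha₂ y₂ hy₂
    simp only [objFun, Pi.add_apply] at this ⊢
    linarith
  have hf₂ : HasFDerivWithinAt (fun y₂ => f (a.1, y₂)) (D.comp (.inr ℝ B₁ B₂)) S₂ a.2 :=
    hf.comp a.2 (hasFDerivAt_prodMk_right a.1 a.2).hasFDerivWithinAt
      fun _ hy₂ => mk_mem_prod ha.1 hy₂
  simpa using hmin.sub_le_of_hasFDerivWithinAt hf₂ hg₂ ha.2 hy₂

theorem objFun_fst_step {b₁ : B₁} (hg₁ : ConvexOn ℝ S₁ g₁) (hg₂ : ConvexOn ℝ S₂ g₂)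
    (ha : a ∈ S₁ ×ˢ S₂) (hz : z ∈ S₁ ×ˢ S₂) (hf : HasFDerivWithinAt f D (S₁ ×ˢ S₂) a)
    (hdesc : ∀ h₁, a.1 + h₁ ∈ S₁ → f (a.1 + h₁, a.2) ≤ f a + D (h₁, 0) + L / 2 * ‖h₁‖ ^ 2)
    (hqsc : f a + D (z - a) + σ / 2 * n ^ 2 ≤ f z) (hn : β * ‖a.1 - z.1‖ ^ 2 ≤ n ^ 2)
    (hσ : 0 ≤ σ) (hβ : 0 ≤ β) (hσβ : σ * β ≤ L)
    (ha₂ : ∀ y₂ ∈ S₂, objFun f g₁ g₂ a ≤ objFun f g₁ g₂ (a.1, y₂))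
    (hb₁ : ∀ y₁ ∈ S₁, objFun f g₁ g₂ (b₁, a.2) ≤ objFun f g₁ g₂ (y₁, a.2)) :
    objFun f g₁ g₂ (b₁, a.2) - objFun f g₁ g₂ z ≤
      (1 - σ * β / L) * (objFun f g₁ g₂ a - objFun f g₁ g₂ z) := by
  have hμ : 0 ≤ σ * β := mul_nonneg hσ hβ
  set t := σ * β / L
  have ht₀ : 0 ≤ t := div_nonneg hμ (hμ.trans hσβ)
  have ht₁ : t ≤ 1 := div_le_one_of_le₀ hσβ (hμ.trans hσβ)
  have htL : L * t ≤ σ * β := by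
    rcases eq_or_ne L 0 with hL | hL
    · simp [hL, hμ]
    · exact (mul_div_cancel₀ _ hL).le
  have hvar := objFun_snd_optimality hg₂ ha hf ha₂ hz.2
  have hseg : f (b₁, a.2) + g₁ b₁ ≤ f a + g₁ a.1 + t * (D (z.1 - a.1, 0) + g₁ z.1 - g₁ a.1)
      + L / 2 * t ^ 2 * ‖z.1 - a.1‖ ^ 2 := by
    have hmin : IsMinOn ((fun y₁ => f (y₁, a.2)) + g₁) S₁ b₁ := isMinOn_iff.2 fun y₁ hy₁ => by
      have := hb₁ y₁ hy₁
      simp only [objFun, Pi.add_apply] at this ⊢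
      linarith
    simpa using hmin.add_le_of_descent (D := D.comp (.inl ℝ B₁ B₂)) hdesc hg₁ ha.1 hz.1 ht₀ ht₁
  have hsplit : D (z - a) = D (z.1 - a.1, 0) + D (0, z.2 - a.2) := by
    rw [← map_add]
    congr 1
    ext <;> simp
  have hcurv : L / 2 * t ^ 2 * ‖z.1 - a.1‖ ^ 2 ≤ t * (σ / 2 * n ^ 2) := by
    rw [norm_sub_rev] at hn
    have h₁ := mul_le_mul_of_nonneg_left htL (mul_nonneg ht₀ (sq_nonneg ‖z.1 - a.1‖))
    have h₂ := mul_le_mul_of_nonneg_left hn (mul_nonneg ht₀ hσ)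
    linarith
  have hgap := mul_le_mul_of_nonneg_left
    (show D (z.1 - a.1, 0) + σ / 2 * n ^ 2 ≤ f z - f a - (g₂ a.2 - g₂ z.2) by linarith) ht₀
  simp only [objFun]
  linarith

theorem objFun_snd_step {b₂ : B₂} (hg₁ : ConvexOn ℝ S₁ g₁) (hg₂ : ConvexOn ℝ S₂ g₂)
    (ha : a ∈ S₁ ×ˢ S₂) (hz : z ∈ S₁ ×ˢ S₂) (hf : HasFDerivWithinAt f D (S₁ ×ˢ S₂) a)
    (hdesc : ∀ h₂, a.2 + h₂ ∈ S₂ → f (a.1, a.2 + h₂) ≤ f a + D (0, h₂) + L / 2 * ‖h₂‖ ^ 2)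
    (hqsc : f a + D (z - a) + σ / 2 * n ^ 2 ≤ f z) (hn : β * ‖a.2 - z.2‖ ^ 2 ≤ n ^ 2)
    (hσ : 0 ≤ σ) (hβ : 0 ≤ β) (hσβ : σ * β ≤ L)
    (ha₁ : ∀ y₁ ∈ S₁, objFun f g₁ g₂ a ≤ objFun f g₁ g₂ (y₁, a.2))
    (hb₂ : ∀ y₂ ∈ S₂, objFun f g₁ g₂ (a.1, b₂) ≤ objFun f g₁ g₂ (a.1, y₂)) :
    objFun f g₁ g₂ (a.1, b₂) - objFun f g₁ g₂ z ≤
      (1 - σ * β / L) * (objFun f g₁ g₂ a - objFun f g₁ g₂ z) := by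
  have hswap (w : B₁ × B₂) : objFun f g₁ g₂ w = objFun (f ∘ Prod.swap) g₂ g₁ w.swap := by
    simp only [objFun, Function.comp_apply, Prod.swap_swap, Prod.fst_swap, Prod.snd_swap]
    ring
  have hf' : HasFDerivWithinAt (f ∘ Prod.swap)
      (D.comp (ContinuousLinearEquiv.prodComm ℝ B₂ B₁ : (B₂ × B₁) →L[ℝ] B₁ × B₂))
      (S₂ ×ˢ S₁) a.swap :=
    hf.comp a.swap (ContinuousLinearEquiv.prodComm ℝ B₂ B₁).hasFDerivAt.hasFDerivWithinAt
      fun _ hw => mem_prod.2 ⟨hw.2, hw.1⟩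
  have := objFun_fst_step (a := a.swap) (z := z.swap) (b₁ := b₂) hg₂ hg₁ ⟨ha.2, ha.1⟩
    ⟨hz.2, hz.1⟩ hf'
    (by simpa using hdesc) (by simpa using hqsc) (by simpa using hn) hσ hβ hσβ
    (by simpa [hswap] using ha₁) (by simpa [hswap] using hb₂)
  simpa [hswap] using this

end Blocks

theorem stmt1_general
    {B₁ B₂ : Type*}
    [NormedAddCommGroup B₁] [NormedSpace ℝ B₁]
    [NormedAddCommGroup B₂] [NormedSpace ℝ B₂]
    (f : B₁ × B₂ → ℝ) (Df : B₁ × B₂ → (B₁ × B₂) →L[ℝ] ℝ)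
    (g₁ : B₁ → ℝ) (g₂ : B₂ → ℝ) (S₁ : Set B₁) (S₂ : Set B₂)
    -- (P3): g₁, g₂ proper convex, subdifferentiable on their domains
    (hg₁conv : ConvexOn ℝ S₁ g₁) (hg₂conv : ConvexOn ℝ S₂ g₂)
    -- (P4): f convex and Fréchet differentiable on dom g₁ × dom g₂, with derivative Df
    (hfdiff : ∀ x ∈ S₁ ×ˢ S₂, HasFDerivWithinAt f (Df x) (S₁ ×ˢ S₂) x)
    -- (P2): a norm `N` on the product space and the constants β₁, β₂
    (N : B₁ × B₂ → ℝ) (β₁ β₂ : ℝ) (hβ₁ : 0 ≤ β₁) (hβ₂ : 0 ≤ β₂)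
    (hN₁ : ∀ z : B₁ × B₂, β₁ * ‖z.1‖ ^ 2 ≤ N z ^ 2)
    (hN₂ : ∀ z : B₁ × B₂, β₂ * ‖z.2‖ ^ 2 ≤ N z ^ 2)
    -- (P5): block descent inequalities with finite constants L₁, L₂ > 0
    (L₁ L₂ : ℝ)
    (hdesc₁ : ∀ x₁ ∈ S₁, ∀ x₂ ∈ S₂, ∀ h₁ : B₁, x₁ + h₁ ∈ S₁ →
      f (x₁ + h₁, x₂) ≤ f (x₁, x₂) + Df (x₁, x₂) (h₁, 0) + L₁ / 2 * ‖h₁‖ ^ 2)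
    (hdesc₂ : ∀ x₁ ∈ S₁, ∀ x₂ ∈ S₂, ∀ h₂ : B₂, x₂ + h₂ ∈ S₂ →
      f (x₁, x₂ + h₂) ≤ f (x₁, x₂) + Df (x₁, x₂) (0, h₂) + L₂ / 2 * ‖h₂‖ ^ 2)
    -- (P6): nonempty optimal set X with optimal value H*
    (X : Set (B₁ × B₂))
    (hX : X = {y ∈ S₁ ×ˢ S₂ | ∀ z ∈ S₁ ×ˢ S₂, objFun f g₁ g₂ y ≤ objFun f g₁ g₂ z})
    (Hstar : ℝ) (hHstar : ∀ y ∈ X, objFun f g₁ g₂ y = Hstar)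
    -- projections onto X with respect to N
    (proj : B₁ × B₂ → B₁ × B₂)
    (hproj : ∀ z ∈ S₁ ×ˢ S₂, proj z ∈ X ∧ ∀ y ∈ X, N (z - proj z) ≤ N (z - y))
    -- (P8a): quasi-strong convexity of f with modulus σ > 0
    (σ : ℝ) (hσ : 0 < σ)
    (hqsc : ∀ z ∈ S₁ ×ˢ S₂,
      f z + Df z (proj z - z) + σ / 2 * N (z - proj z) ^ 2 ≤ f (proj z))
    (hσβ₁ : σ * β₁ ≤ L₁) (hσβ₂ : σ * β₂ ≤ L₂)
    -- the alternating minimization sequence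
    (x : ℕ → B₁ × B₂)
    (hx0 : x 0 ∈ S₁ ×ˢ S₂)
    (hinit : ∀ y₂ ∈ S₂, objFun f g₁ g₂ (x 0) ≤ objFun f g₁ g₂ ((x 0).1, y₂))
    (hstep1 : ∀ k : ℕ, (x (k + 1)).1 ∈ S₁ ∧ ∀ y₁ ∈ S₁,
      objFun f g₁ g₂ ((x (k + 1)).1, (x k).2) ≤ objFun f g₁ g₂ (y₁, (x k).2))
    (hstep2 : ∀ k : ℕ, (x (k + 1)).2 ∈ S₂ ∧ ∀ y₂ ∈ S₂,
      objFun f g₁ g₂ (x (k + 1)) ≤ objFun f g₁ g₂ ((x (k + 1)).1, y₂)) :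
    ∀ k : ℕ,
      objFun f g₁ g₂ (x k) - Hstar ≤
        ((1 - σ * β₁ / L₁) * (1 - σ * β₂ / L₂)) ^ k *
          (objFun f g₁ g₂ (x 0) - Hstar) := by
  have hmem : ∀ k, x k ∈ S₁ ×ˢ S₂
    | 0 => hx0
    | k + 1 => ⟨(hstep1 k).1, (hstep2 k).1⟩
  have hopt₂ : ∀ k, ∀ y₂ ∈ S₂, objFun f g₁ g₂ (x k) ≤ objFun f g₁ g₂ ((x k).1, y₂)
    | 0 => hinit
    | k + 1 => (hstep2 k).2
  have hprojOpt (z) (hz : z ∈ S₁ ×ˢ S₂) :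
      proj z ∈ S₁ ×ˢ S₂ ∧ objFun f g₁ g₂ (proj z) = Hstar := by
    have h := (hproj z hz).1
    exact ⟨(hX ▸ h).1, hHstar _ h⟩
  have hρ₁ : 0 ≤ 1 - σ * β₁ / L₁ :=
    sub_nonneg.2 (div_le_one_of_le₀ hσβ₁ ((mul_nonneg hσ.le hβ₁).trans hσβ₁))
  have hρ₂ : 0 ≤ 1 - σ * β₂ / L₂ :=
    sub_nonneg.2 (div_le_one_of_le₀ hσβ₂ ((mul_nonneg hσ.le hβ₂).trans hσβ₂))
  intro k
  refine le_geom (u := fun k => objFun f g₁ g₂ (x k) - Hstar) (mul_nonneg hρ₁ hρ₂) k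
    fun k _ => ?_
  have ha : ((x (k + 1)).1, (x k).2) ∈ S₁ ×ˢ S₂ := ⟨(hstep1 k).1, (hmem k).2⟩
  obtain ⟨hz₁, hH₁⟩ := hprojOpt _ (hmem k)
  obtain ⟨hz₂, hH₂⟩ := hprojOpt _ ha
  have h₁ := objFun_fst_step hg₁conv hg₂conv (hmem k) hz₁ (hfdiff _ (hmem k))
    (hdesc₁ _ (hmem k).1 _ (hmem k).2) (hqsc _ (hmem k)) (hN₁ (x k - proj (x k))) hσ.le hβ₁
    hσβ₁ (hopt₂ k) (hstep1 k).2
  have h₂ := objFun_snd_step hg₁conv hg₂conv ha hz₂ (hfdiff _ ha) (hdesc₂ _ ha.1 _ ha.2)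
    (hqsc _ ha) (hN₂ (_ - proj _)) hσ.le hβ₂ hσβ₂ (hstep1 k).2 (hstep2 k).2
  rw [hH₁] at h₁
  rw [hH₂] at h₂
  calc objFun f g₁ g₂ (x (k + 1)) - Hstar
      ≤ (1 - σ * β₂ / L₂) * (objFun f g₁ g₂ ((x (k + 1)).1, (x k).2) - Hstar) := h₂
    _ ≤ (1 - σ * β₂ / L₂) * ((1 - σ * β₁ / L₁) * (objFun f g₁ g₂ (x k) - Hstar)) :=
        mul_le_mul_of_nonneg_left h₁ hρ₂
    _ = (1 - σ * β₁ / L₁) * (1 - σ * β₂ / L₂) * (objFun f g₁ g₂ (x k) - Hstar) := by ring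

/-- linear convergence of alternating minimization under quasi-strong
convexity: for every `k ≥ 0`,
`H^k - H* ≤ [(1 - σβ₁/L₁) (1 - σβ₂/L₂)]^k (H⁰ - H*)`. -/
theorem stmt1
    {B₁ B₂ : Type*}
    [NormedAddCommGroup B₁] [NormedSpace ℝ B₁] [CompleteSpace B₁]
    [NormedAddCommGroup B₂] [NormedSpace ℝ B₂] [CompleteSpace B₂]
    (f : B₁ × B₂ → ℝ) (Df : B₁ × B₂ → (B₁ × B₂) →L[ℝ] ℝ)
    (g₁ : B₁ → ℝ) (g₂ : B₂ → ℝ) (S₁ : Set B₁) (S₂ : Set B₂)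
    -- (P3): g₁, g₂ proper convex, subdifferentiable on their domains
    (hS₁c : Convex ℝ S₁) (hS₂c : Convex ℝ S₂)
    (hS₁ne : S₁.Nonempty) (hS₂ne : S₂.Nonempty)
    (hg₁conv : ConvexOn ℝ S₁ g₁) (hg₂conv : ConvexOn ℝ S₂ g₂)
    (hg₁sub : ∀ x₁ ∈ S₁, ∃ d : B₁ →L[ℝ] ℝ, ∀ y₁ ∈ S₁, g₁ x₁ + d (y₁ - x₁) ≤ g₁ y₁)
    (hg₂sub : ∀ x₂ ∈ S₂, ∃ d : B₂ →L[ℝ] ℝ, ∀ y₂ ∈ S₂, g₂ x₂ + d (y₂ - x₂) ≤ g₂ y₂)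
    -- (P4): f convex and Fréchet differentiable on dom g₁ × dom g₂, with derivative Df
    (hfconv : ConvexOn ℝ (S₁ ×ˢ S₂) f)
    (hfdiff : ∀ x ∈ S₁ ×ˢ S₂, HasFDerivWithinAt f (Df x) (S₁ ×ˢ S₂) x)
    -- (P2): a norm `N` on the product space and the constants β₁, β₂
    (N : B₁ × B₂ → ℝ) (β₁ β₂ : ℝ) (hβ₁ : 0 ≤ β₁) (hβ₂ : 0 ≤ β₂)
    (hNnonneg : ∀ z : B₁ × B₂, 0 ≤ N z)
    (hN₁ : ∀ z : B₁ × B₂, β₁ * ‖z.1‖ ^ 2 ≤ N z ^ 2)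
    (hN₂ : ∀ z : B₁ × B₂, β₂ * ‖z.2‖ ^ 2 ≤ N z ^ 2)
    -- (P5): block descent inequalities with finite constants L₁, L₂ > 0
    (L₁ L₂ : ℝ) (hL₁pos : 0 < L₁) (hL₂pos : 0 < L₂)
    (hdesc₁ : ∀ x₁ ∈ S₁, ∀ x₂ ∈ S₂, ∀ h₁ : B₁, x₁ + h₁ ∈ S₁ →
      f (x₁ + h₁, x₂) ≤ f (x₁, x₂) + Df (x₁, x₂) (h₁, 0) + L₁ / 2 * ‖h₁‖ ^ 2)
    (hdesc₂ : ∀ x₁ ∈ S₁, ∀ x₂ ∈ S₂, ∀ h₂ : B₂, x₂ + h₂ ∈ S₂ →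
      f (x₁, x₂ + h₂) ≤ f (x₁, x₂) + Df (x₁, x₂) (0, h₂) + L₂ / 2 * ‖h₂‖ ^ 2)
    -- (P6): nonempty optimal set X with optimal value H*
    (X : Set (B₁ × B₂))
    (hX : X = {y ∈ S₁ ×ˢ S₂ | ∀ z ∈ S₁ ×ˢ S₂, objFun f g₁ g₂ y ≤ objFun f g₁ g₂ z})
    (hXne : X.Nonempty)
    (Hstar : ℝ) (hHstar : ∀ y ∈ X, objFun f g₁ g₂ y = Hstar)
    -- projections onto X with respect to N
    (proj : B₁ × B₂ → B₁ × B₂)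
    (hproj : ∀ z ∈ S₁ ×ˢ S₂, proj z ∈ X ∧ ∀ y ∈ X, N (z - proj z) ≤ N (z - y))
    -- (P8a): quasi-strong convexity of f with modulus σ > 0
    (σ : ℝ) (hσ : 0 < σ)
    (hqsc : ∀ z ∈ S₁ ×ˢ S₂,
      f z + Df z (proj z - z) + σ / 2 * N (z - proj z) ^ 2 ≤ f (proj z))
    (hσβ₁ : σ * β₁ ≤ L₁) (hσβ₂ : σ * β₂ ≤ L₂)
    -- the alternating minimization sequence
    (x : ℕ → B₁ × B₂)
    (hx0 : x 0 ∈ S₁ ×ˢ S₂)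
    (hinit : ∀ y₂ ∈ S₂, objFun f g₁ g₂ (x 0) ≤ objFun f g₁ g₂ ((x 0).1, y₂))
    (hstep1 : ∀ k : ℕ, (x (k + 1)).1 ∈ S₁ ∧ ∀ y₁ ∈ S₁,
      objFun f g₁ g₂ ((x (k + 1)).1, (x k).2) ≤ objFun f g₁ g₂ (y₁, (x k).2))
    (hstep2 : ∀ k : ℕ, (x (k + 1)).2 ∈ S₂ ∧ ∀ y₂ ∈ S₂,
      objFun f g₁ g₂ (x (k + 1)) ≤ objFun f g₁ g₂ ((x (k + 1)).1, y₂)) :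
    ∀ k : ℕ,
      objFun f g₁ g₂ (x k) - Hstar ≤
        ((1 - σ * β₁ / L₁) * (1 - σ * β₂ / L₂)) ^ k *
          (objFun f g₁ g₂ (x 0) - Hstar) :=
  stmt1_general f Df g₁ g₂ S₁ S₂ hg₁conv hg₂conv hfdiff N β₁ β₂ hβ₁ hβ₂ hN₁ hN₂ L₁ L₂ hdesc₁ hdesc₂
    X hX Hstar hHstar proj hproj σ hσ hqsc hσβ₁ hσβ₂ x hx0 hinit hstep1 hstep2
end

section
/- Assume only the first-block descent inequality holds, with finite constant L₁ > 0, while no Lipschitz-type assumption is made on the second block. Then for every k ≥ 0 the alternating minimization iterates satisfy H^k − H* ≤ (1 − σβ₁/L₁)^k (H⁰ − H*). -/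
open Set

/-- directional derivative lower bound lemma -/
lemma dirDeriv_ge {E : Type*} [NormedAddCommGroup E] [NormedSpace ℝ E]
    {f : E → ℝ} {L : E →L[ℝ] ℝ} {S : Set E} {x w : E} {C : ℝ}
    (hf : HasFDerivWithinAt f L S x)
    (hmem : ∀ t : ℝ, t ∈ Set.Icc (0:ℝ) 1 → x + t • w ∈ S)
    (hC : ∀ t : ℝ, t ∈ Set.Ioc (0:ℝ) 1 → C * t ≤ f (x + t • w) - f x) :
    C ≤ L w := by
  set φ : ℝ → E := fun t => x + t • w with hφdef
  have hφx : φ 0 = x := by simp [hφdef]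
  have hφ : HasDerivWithinAt φ w (Set.Icc 0 1) 0 := by
    have h1 : HasDerivWithinAt (fun t : ℝ => t • w) ((1:ℝ) • w) (Set.Icc 0 1) 0 :=
      (hasDerivWithinAt_id 0 _).smul_const w
    simpa [hφdef] using h1.const_add x
  have hmap : Set.MapsTo φ (Set.Icc 0 1) S := fun t ht => hmem t ht
  have hg : HasDerivWithinAt (f ∘ φ) (L w) (Set.Icc 0 1) 0 :=
    HasFDerivWithinAt.comp_hasDerivWithinAt_of_eq 0 hf hφ hmap hφx.symm
  have htend := hasDerivWithinAt_iff_tendsto_slope.mp hg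
  rw [Set.Icc_diff_left] at htend
  have hne : (nhdsWithin (0:ℝ) (Set.Ioc 0 1)).NeBot := by
    apply mem_closure_iff_nhdsWithin_neBot.mp
    rw [closure_Ioc (one_ne_zero).symm]
    exact ⟨le_refl 0, zero_le_one⟩
  refine ge_of_tendsto htend ?_
  filter_upwards [self_mem_nhdsWithin] with t ht
  have ht0 : (0:ℝ) < t := ht.1
  have : C * t ≤ (f ∘ φ) t - (f ∘ φ) 0 := by
    simpa [hφdef] using hC t ht
  rw [slope_def_field, sub_zero, le_div_iff₀ ht0]
  linarith

/-- linear convergence under quasi-strong convexity, only the first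
block being Lipschitz: for every `k ≥ 0`,
`H^k - H* ≤ (1 - σβ₁/L₁)^k (H⁰ - H*)`. -/
theorem stmt2
    {B₁ B₂ : Type*}
    [NormedAddCommGroup B₁] [NormedSpace ℝ B₁] [CompleteSpace B₁]
    [NormedAddCommGroup B₂] [NormedSpace ℝ B₂] [CompleteSpace B₂]
    (f : B₁ × B₂ → ℝ) (Df : B₁ × B₂ → (B₁ × B₂) →L[ℝ] ℝ)
    (g₁ : B₁ → ℝ) (g₂ : B₂ → ℝ) (S₁ : Set B₁) (S₂ : Set B₂)
    -- (P3): g₁, g₂ proper convex, subdifferentiable on their domains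
    (hS₁c : Convex ℝ S₁) (hS₂c : Convex ℝ S₂)
    (hS₁ne : S₁.Nonempty) (hS₂ne : S₂.Nonempty)
    (hg₁conv : ConvexOn ℝ S₁ g₁) (hg₂conv : ConvexOn ℝ S₂ g₂)
    (hg₁sub : ∀ x₁ ∈ S₁, ∃ d : B₁ →L[ℝ] ℝ, ∀ y₁ ∈ S₁, g₁ x₁ + d (y₁ - x₁) ≤ g₁ y₁)
    (hg₂sub : ∀ x₂ ∈ S₂, ∃ d : B₂ →L[ℝ] ℝ, ∀ y₂ ∈ S₂, g₂ x₂ + d (y₂ - x₂) ≤ g₂ y₂)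
    -- (P4): f convex and Fréchet differentiable on dom g₁ × dom g₂, with derivative Df
    (hfconv : ConvexOn ℝ (S₁ ×ˢ S₂) f)
    (hfdiff : ∀ x ∈ S₁ ×ˢ S₂, HasFDerivWithinAt f (Df x) (S₁ ×ˢ S₂) x)
    -- (P2): a norm `N` on the product space and the constants β₁, β₂
    (N : B₁ × B₂ → ℝ) (β₁ : ℝ) (hβ₁ : 0 ≤ β₁)
    (hNnonneg : ∀ z : B₁ × B₂, 0 ≤ N z)
    (hN₁ : ∀ z : B₁ × B₂, β₁ * ‖z.1‖ ^ 2 ≤ N z ^ 2)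
    -- (P5): first-block descent inequality with finite constant L₁ > 0
    (L₁ : ℝ) (hL₁pos : 0 < L₁)
    (hdesc₁ : ∀ x₁ ∈ S₁, ∀ x₂ ∈ S₂, ∀ h₁ : B₁, x₁ + h₁ ∈ S₁ →
      f (x₁ + h₁, x₂) ≤ f (x₁, x₂) + Df (x₁, x₂) (h₁, 0) + L₁ / 2 * ‖h₁‖ ^ 2)
    -- (P6): nonempty optimal set X with optimal value H*
    (X : Set (B₁ × B₂))
    (hX : X = {y ∈ S₁ ×ˢ S₂ | ∀ z ∈ S₁ ×ˢ S₂, objFun f g₁ g₂ y ≤ objFun f g₁ g₂ z})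
    (hXne : X.Nonempty)
    (Hstar : ℝ) (hHstar : ∀ y ∈ X, objFun f g₁ g₂ y = Hstar)
    -- projections onto X with respect to N
    (proj : B₁ × B₂ → B₁ × B₂)
    (hproj : ∀ z ∈ S₁ ×ˢ S₂, proj z ∈ X ∧ ∀ y ∈ X, N (z - proj z) ≤ N (z - y))
    -- (P8a): quasi-strong convexity of f with modulus σ > 0
    (σ : ℝ) (hσ : 0 < σ)
    (hqsc : ∀ z ∈ S₁ ×ˢ S₂,
      f z + Df z (proj z - z) + σ / 2 * N (z - proj z) ^ 2 ≤ f (proj z))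
    (hσβ₁ : σ * β₁ ≤ L₁)
    -- the alternating minimization sequence
    (x : ℕ → B₁ × B₂)
    (hx0 : x 0 ∈ S₁ ×ˢ S₂)
    (hinit : ∀ y₂ ∈ S₂, objFun f g₁ g₂ (x 0) ≤ objFun f g₁ g₂ ((x 0).1, y₂))
    (hstep1 : ∀ k : ℕ, (x (k + 1)).1 ∈ S₁ ∧ ∀ y₁ ∈ S₁,
      objFun f g₁ g₂ ((x (k + 1)).1, (x k).2) ≤ objFun f g₁ g₂ (y₁, (x k).2))
    (hstep2 : ∀ k : ℕ, (x (k + 1)).2 ∈ S₂ ∧ ∀ y₂ ∈ S₂,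
      objFun f g₁ g₂ (x (k + 1)) ≤ objFun f g₁ g₂ ((x (k + 1)).1, y₂)) :
    ∀ k : ℕ,
      objFun f g₁ g₂ (x k) - Hstar ≤
        (1 - σ * β₁ / L₁) ^ k * (objFun f g₁ g₂ (x 0) - Hstar) := by
  set t := σ * β₁ / L₁ with htdef
  have hL₁ne : L₁ ≠ 0 := ne_of_gt hL₁pos
  have ht0 : 0 ≤ t := by rw [htdef]; exact div_nonneg (mul_nonneg hσ.le hβ₁) hL₁pos.le
  have ht1 : t ≤ 1 := by rw [htdef]; exact (div_le_one hL₁pos).mpr hσβ₁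
  have hmem : ∀ k, x k ∈ S₁ ×ˢ S₂ := by
    intro k
    cases k with
    | zero => exact hx0
    | succ k => exact ⟨(hstep1 k).1, (hstep2 k).1⟩
  have hpart : ∀ k, ∀ y₂ ∈ S₂, objFun f g₁ g₂ (x k) ≤ objFun f g₁ g₂ ((x k).1, y₂) := by
    intro k
    cases k with
    | zero => exact hinit
    | succ k => exact (hstep2 k).2
  have key : ∀ k, objFun f g₁ g₂ (x (k+1)) - Hstar ≤
      (1 - t) * (objFun f g₁ g₂ (x k) - Hstar) := by
    intro k
    set z := x k with hzdef
    have hzS : z ∈ S₁ ×ˢ S₂ := hmem k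
    have hz1 : z.1 ∈ S₁ := hzS.1
    have hz2 : z.2 ∈ S₂ := hzS.2
    set p := proj z with hpdef
    have hpX : p ∈ X := by rw [hpdef]; exact (hproj z hzS).1
    have hpS : p ∈ S₁ ×ˢ S₂ := by rw [hX] at hpX; exact hpX.1
    have hp1 : p.1 ∈ S₁ := hpS.1
    have hp2 : p.2 ∈ S₂ := hpS.2
    have hpH : objFun f g₁ g₂ p = Hstar := hHstar p hpX
    have hmem2 : ∀ s : ℝ, 0 ≤ s → s ≤ 1 → z.2 + s • (p.2 - z.2) ∈ S₂ := by
      intro s hs0 hs1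
      have hcomb := hS₂c hz2 hp2 (by linarith : (0:ℝ) ≤ 1 - s) hs0 (by ring)
      have heq : z.2 + s • (p.2 - z.2) = (1 - s) • z.2 + s • p.2 := by module
      rw [heq]; exact hcomb
    have heqw : ∀ s : ℝ, z + s • (((0:B₁), p.2 - z.2) : B₁ × B₂)
        = (z.1, z.2 + s • (p.2 - z.2)) := by
      intro s
      simp [Prod.ext_iff]
    have hA : g₂ z.2 - g₂ p.2 ≤ Df z ((0:B₁), p.2 - z.2) := by
      apply dirDeriv_ge (hfdiff z hzS)
      · intro s hs
        rw [heqw s]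
        exact ⟨hz1, hmem2 s hs.1 hs.2⟩
      · intro s hs
        have hy₂ : z.2 + s • (p.2 - z.2) ∈ S₂ := hmem2 s hs.1.le hs.2
        have h1 := hpart k _ hy₂
        rw [← hzdef] at h1
        have hcv : g₂ (z.2 + s • (p.2 - z.2)) ≤ (1 - s) * g₂ z.2 + s * g₂ p.2 := by
          have hcomb := hg₂conv.2 hz2 hp2 (by linarith [hs.2] : (0:ℝ) ≤ 1 - s) hs.1.le (by ring)
          have heq : z.2 + s • (p.2 - z.2) = (1 - s) • z.2 + s • p.2 := by module
          rw [heq]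
          simpa using hcomb
        rw [heqw s]
        simp only [objFun] at h1 ⊢
        have hzz : ((z.1, z.2) : B₁ × B₂) = z := Prod.mk.eta
        nlinarith [h1, hcv]
    have hB : Df z (p - z) ≤ f p - f z - σ / 2 * N (z - p) ^ 2 := by
      have hq := hqsc z hzS
      rw [← hpdef] at hq
      linarith
    have hsplit : Df z ((p.1 - z.1, (0:B₂)) : B₁ × B₂)
        = Df z (p - z) - Df z ((0:B₁), p.2 - z.2) := by
      have heq : ((p.1 - z.1, (0:B₂)) : B₁ × B₂)
          = (p - z) - ((0:B₁), p.2 - z.2) := by simp [Prod.ext_iff]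
      rw [heq, map_sub]
    have hy₁mem : z.1 + t • (p.1 - z.1) ∈ S₁ := by
      have hcomb := hS₁c hz1 hp1 (by linarith : (0:ℝ) ≤ 1 - t) ht0 (by ring)
      have heq : z.1 + t • (p.1 - z.1) = (1 - t) • z.1 + t • p.1 := by module
      rw [heq]; exact hcomb
    have c1 : objFun f g₁ g₂ (x (k+1)) ≤ objFun f g₁ g₂ ((x (k+1)).1, z.2) :=
      (hstep2 k).2 z.2 hz2
    have c2 : objFun f g₁ g₂ ((x (k+1)).1, z.2)
        ≤ objFun f g₁ g₂ (z.1 + t • (p.1 - z.1), z.2) := by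
      have h := (hstep1 k).2 (z.1 + t • (p.1 - z.1)) hy₁mem
      rw [← hzdef] at h
      exact h
    have c3 : f (z.1 + t • (p.1 - z.1), z.2)
        ≤ f z + Df z (t • (p.1 - z.1), (0:B₂)) + L₁ / 2 * ‖t • (p.1 - z.1)‖ ^ 2 := by
      have h := hdesc₁ z.1 hz1 z.2 hz2 (t • (p.1 - z.1)) hy₁mem
      have hzz : ((z.1, z.2) : B₁ × B₂) = z := Prod.mk.eta
      rw [hzz] at h
      exact h
    have c4 : g₁ (z.1 + t • (p.1 - z.1)) ≤ (1 - t) * g₁ z.1 + t * g₁ p.1 := by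
      have hcomb := hg₁conv.2 hz1 hp1 (by linarith : (0:ℝ) ≤ 1 - t) ht0 (by ring)
      have heq : z.1 + t • (p.1 - z.1) = (1 - t) • z.1 + t • p.1 := by module
      rw [heq]
      simpa using hcomb
    have c5 : Df z ((t • (p.1 - z.1), (0:B₂)) : B₁ × B₂)
        = t * Df z ((p.1 - z.1, (0:B₂)) : B₁ × B₂) := by
      have heq : ((t • (p.1 - z.1), (0:B₂)) : B₁ × B₂)
          = t • ((p.1 - z.1, (0:B₂)) : B₁ × B₂) := by
        simp [Prod.ext_iff]
      rw [heq, map_smul]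
      simp
    have c6 : ‖t • (p.1 - z.1)‖ ^ 2 = t ^ 2 * ‖p.1 - z.1‖ ^ 2 := by
      rw [norm_smul, mul_pow, Real.norm_eq_abs, sq_abs]
    have c7 : β₁ * ‖p.1 - z.1‖ ^ 2 ≤ N (z - p) ^ 2 := by
      have h := hN₁ (z - p)
      have hnn : ‖(z - p).1‖ = ‖p.1 - z.1‖ := by
        rw [Prod.fst_sub, norm_sub_rev]
      rw [hnn] at h
      exact h
    have e1 : t * Df z ((p.1 - z.1, (0:B₂)) : B₁ × B₂)
        ≤ t * ((f p - f z - σ / 2 * N (z - p) ^ 2) - (g₂ z.2 - g₂ p.2)) := by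
      apply mul_le_mul_of_nonneg_left _ ht0
      rw [hsplit]
      linarith
    have e2 : L₁ / 2 * ‖t • (p.1 - z.1)‖ ^ 2 ≤ t * (σ / 2 * N (z - p) ^ 2) := by
      have e2a : L₁ / 2 * ‖t • (p.1 - z.1)‖ ^ 2
          = t * (σ / 2 * (β₁ * ‖p.1 - z.1‖ ^ 2)) := by
        rw [c6, htdef]
        field_simp
      rw [e2a]
      apply mul_le_mul_of_nonneg_left _ ht0
      nlinarith [c7, hσ.le]
    simp only [objFun] at c1 c2 hpH ⊢
    have hpH2 : t * (f p + g₁ p.1 + g₂ p.2) = t * Hstar := by rw [hpH]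
    linarith [c1, c2, c3, c4, c5, e1, e2, hpH, hpH2]
  intro k
  induction k with
  | zero => simp
  | succ k ih =>
    have h1 := key k
    have h2 : (1 - t) * (objFun f g₁ g₂ (x k) - Hstar)
        ≤ (1 - t) * ((1 - t) ^ k * (objFun f g₁ g₂ (x 0) - Hstar)) :=
      mul_le_mul_of_nonneg_left ih (by linarith)
    calc objFun f g₁ g₂ (x (k+1)) - Hstar
        ≤ (1 - t) * (objFun f g₁ g₂ (x k) - Hstar) := h1
      _ ≤ (1 - t) * ((1 - t) ^ k * (objFun f g₁ g₂ (x 0) - Hstar)) := h2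
      _ = (1 - t) ^ (k + 1) * (objFun f g₁ g₂ (x 0) - Hstar) := by ring
end

section
/- Let x = (x₁,x₂) ∈ dom g₁ × dom g₂ and let x̄ = (x̄₁,x̄₂) be its projection onto the optimal set X. Then f(x) − f(x̄) ≤ (L₁/(σβ₁)) [ f(x₁,x₂) − f(x₁ + (σβ₁/L₁)(x̄₁ − x₁), x₂) ] + ⟨∇₂f(x₁,x₂), x₂ − x̄₂⟩. -/
open Set

/-!
Take the step `α = σβ₁/L₁ ∈ (0, 1]` from `x₁` towards `x̄₁` in the first block. Since `L₁α = σβ₁`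
and `β₁‖x̄₁ - x₁‖² ≤ ‖x - x̄‖²`, the quadratic term of the descent inequality is at most
`α · (σ/2)‖x - x̄‖²`, which is exactly `α` times the quadratic term of quasi-strong convexity.
Adding the two inequalities, the first-block derivative terms cancel and only the second-block
term `⟨∇₂f(x), x₂ - x̄₂⟩` survives; dividing by `α` gives the estimate.
-/

section BlockDescent

variable {E F : Type*} [NormedAddCommGroup E] [NormedSpace ℝ E]
  [NormedAddCommGroup F] [NormedSpace ℝ F]

theorem firstBlock_descent_at_scaled_step {f : E × F → ℝ} {D : E × F →L[ℝ] ℝ} {x : E × F}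
    {v : E} {L σ β r : ℝ} (hL : 0 < L) (hσ : 0 ≤ σ) (hβ : 0 ≤ β) (hv : β * ‖v‖ ^ 2 ≤ r)
    (hdesc : f (x.1 + (σ * β / L) • v, x.2) ≤
      f x + D ((σ * β / L) • v, 0) + L / 2 * ‖(σ * β / L) • v‖ ^ 2) :
    f (x.1 + (σ * β / L) • v, x.2) ≤ f x + σ * β / L * D (v, 0) + σ * β / L * (σ / 2 * r) := by
  have hlin : D ((σ * β / L) • v, 0) = σ * β / L * D (v, 0) :=
    calc D ((σ * β / L) • v, 0) = D ((σ * β / L) • (v, 0)) := by rw [Prod.smul_mk, smul_zero]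
      _ = σ * β / L * D (v, 0) := D.map_smul _ _
  have hquad : L / 2 * ‖(σ * β / L) • v‖ ^ 2 = σ * β / L * (σ / 2 * (β * ‖v‖ ^ 2)) := by
    rw [norm_smul, Real.norm_of_nonneg (by positivity)]
    field_simp
  have hα : 0 ≤ σ * β / L := by positivity
  calc f (x.1 + (σ * β / L) • v, x.2)
      ≤ f x + σ * β / L * D (v, 0) + σ * β / L * (σ / 2 * (β * ‖v‖ ^ 2)) := by
        rwa [hlin, hquad] at hdesc
    _ ≤ f x + σ * β / L * D (v, 0) + σ * β / L * (σ / 2 * r) := by gcongr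

theorem sub_le_inv_mul_sub_add_of_firstBlock_descent {f : E × F → ℝ} {D : E × F →L[ℝ] ℝ}
    {x y : E × F} {α r : ℝ} (hα : 0 < α)
    (hdesc : f (x.1 + α • (y.1 - x.1), x.2) ≤ f x + α * D (y.1 - x.1, 0) + α * r)
    (hqsc : f x + D (y - x) + r ≤ f y) :
    f x - f y ≤ α⁻¹ * (f x - f (x.1 + α • (y.1 - x.1), x.2)) + D (0, x.2 - y.2) := by
  have hsplit : D (y - x) = D (y.1 - x.1, 0) - D (0, x.2 - y.2) := by
    rw [← map_sub]
    congr 1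
    ext <;> simp
  have hscaled :
      α * (f x - f y) ≤ f x - f (x.1 + α • (y.1 - x.1), x.2) + α * D (0, x.2 - y.2) := by
    rw [hsplit] at hqsc
    linarith [mul_le_mul_of_nonneg_left hqsc hα.le]
  calc f x - f y = α⁻¹ * (α * (f x - f y)) := by field_simp
    _ ≤ α⁻¹ * (f x - f (x.1 + α • (y.1 - x.1), x.2) + α * D (0, x.2 - y.2)) := by gcongr
    _ = α⁻¹ * (f x - f (x.1 + α • (y.1 - x.1), x.2)) + D (0, x.2 - y.2) := by field_simp

end BlockDescent

theorem stmt4_general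
    {B₁ B₂ : Type*}
    [NormedAddCommGroup B₁] [NormedSpace ℝ B₁]
    [NormedAddCommGroup B₂] [NormedSpace ℝ B₂]
    (f : B₁ × B₂ → ℝ) (Df : B₁ × B₂ → (B₁ × B₂) →L[ℝ] ℝ)
    (g₁ : B₁ → ℝ) (g₂ : B₂ → ℝ) (S₁ : Set B₁) (S₂ : Set B₂)
    -- (P3): g₁, g₂ proper convex on their (convex, nonempty) domains
    (hS₁c : Convex ℝ S₁)
    -- (P2): a norm `N` on the product space and the constant β₁ > 0
    (N : B₁ × B₂ → ℝ) (β₁ : ℝ) (hβ₁ : 0 < β₁)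
    (hN₁ : ∀ z : B₁ × B₂, β₁ * ‖z.1‖ ^ 2 ≤ N z ^ 2)
    -- (P5): first-block descent inequality with finite constant L₁ > 0
    (L₁ : ℝ) (hL₁pos : 0 < L₁)
    (hdesc₁ : ∀ x₁ ∈ S₁, ∀ x₂ ∈ S₂, ∀ h₁ : B₁, x₁ + h₁ ∈ S₁ →
      f (x₁ + h₁, x₂) ≤ f (x₁, x₂) + Df (x₁, x₂) (h₁, 0) + L₁ / 2 * ‖h₁‖ ^ 2)
    -- (P6): nonempty optimal set X
    (X : Set (B₁ × B₂))
    (hX : X = {y ∈ S₁ ×ˢ S₂ | ∀ z ∈ S₁ ×ˢ S₂, objFun f g₁ g₂ y ≤ objFun f g₁ g₂ z})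
    -- projections onto X with respect to N
    (proj : B₁ × B₂ → B₁ × B₂)
    (hproj : ∀ z ∈ S₁ ×ˢ S₂, proj z ∈ X ∧ ∀ y ∈ X, N (z - proj z) ≤ N (z - y))
    -- (P8a): quasi-strong convexity of f with modulus σ > 0, and 0 < σβ₁/L₁ ≤ 1
    (σ : ℝ) (hσ : 0 < σ)
    (hqsc : ∀ z ∈ S₁ ×ˢ S₂,
      f z + Df z (proj z - z) + σ / 2 * N (z - proj z) ^ 2 ≤ f (proj z))
    (hratio : σ * β₁ / L₁ ≤ 1)
    -- the point x and its projection
    (x : B₁ × B₂) (hx : x ∈ S₁ ×ˢ S₂) :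
    f x - f (proj x) ≤
      L₁ / (σ * β₁) *
        (f x - f (x.1 + (σ * β₁ / L₁) • ((proj x).1 - x.1), x.2)) +
      Df x (0, x.2 - (proj x).2) := by
  have hproj_mem : proj x ∈ S₁ ×ˢ S₂ := (hX ▸ (hproj x hx).1).1
  have hstep_mem : x.1 + (σ * β₁ / L₁) • ((proj x).1 - x.1) ∈ S₁ :=
    hS₁c.add_smul_sub_mem hx.1 hproj_mem.1 ⟨by positivity, hratio⟩
  have hnorm : β₁ * ‖(proj x).1 - x.1‖ ^ 2 ≤ N (x - proj x) ^ 2 := by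
    simpa only [Prod.fst_sub, norm_sub_rev] using hN₁ (x - proj x)
  have hdesc := hdesc₁ x.1 hx.1 x.2 hx.2 _ hstep_mem
  rw [Prod.mk.eta] at hdesc
  simpa only [inv_div] using sub_le_inv_mul_sub_add_of_firstBlock_descent (by positivity)
      (firstBlock_descent_at_scaled_step hL₁pos hσ.le hβ₁.le hnorm hdesc) (hqsc x hx)

/-- key estimate for the smooth part under quasi-strong convexity:
for `x = (x₁,x₂) ∈ dom g₁ × dom g₂` with projection `x̄ = (x̄₁,x̄₂)` onto the optimal set `X`,
`f(x) - f(x̄) ≤ (L₁/(σβ₁)) [ f(x₁,x₂) - f(x₁ + (σβ₁/L₁)(x̄₁ - x₁), x₂) ]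
  + ⟨∇₂f(x₁,x₂), x₂ - x̄₂⟩`. -/
theorem stmt4
    {B₁ B₂ : Type*}
    [NormedAddCommGroup B₁] [NormedSpace ℝ B₁] [CompleteSpace B₁]
    [NormedAddCommGroup B₂] [NormedSpace ℝ B₂] [CompleteSpace B₂]
    (f : B₁ × B₂ → ℝ) (Df : B₁ × B₂ → (B₁ × B₂) →L[ℝ] ℝ)
    (g₁ : B₁ → ℝ) (g₂ : B₂ → ℝ) (S₁ : Set B₁) (S₂ : Set B₂)
    -- (P3): g₁, g₂ proper convex on their (convex, nonempty) domains
    (hS₁c : Convex ℝ S₁) (hS₂c : Convex ℝ S₂)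
    (hS₁ne : S₁.Nonempty) (hS₂ne : S₂.Nonempty)
    (hg₁conv : ConvexOn ℝ S₁ g₁) (hg₂conv : ConvexOn ℝ S₂ g₂)
    -- (P4): f convex and Fréchet differentiable on dom g₁ × dom g₂, with derivative Df
    (hfconv : ConvexOn ℝ (S₁ ×ˢ S₂) f)
    (hfdiff : ∀ x ∈ S₁ ×ˢ S₂, HasFDerivWithinAt f (Df x) (S₁ ×ˢ S₂) x)
    -- (P2): a norm `N` on the product space and the constant β₁ > 0
    (N : B₁ × B₂ → ℝ) (β₁ : ℝ) (hβ₁ : 0 < β₁)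
    (hNnonneg : ∀ z : B₁ × B₂, 0 ≤ N z)
    (hN₁ : ∀ z : B₁ × B₂, β₁ * ‖z.1‖ ^ 2 ≤ N z ^ 2)
    -- (P5): first-block descent inequality with finite constant L₁ > 0
    (L₁ : ℝ) (hL₁pos : 0 < L₁)
    (hdesc₁ : ∀ x₁ ∈ S₁, ∀ x₂ ∈ S₂, ∀ h₁ : B₁, x₁ + h₁ ∈ S₁ →
      f (x₁ + h₁, x₂) ≤ f (x₁, x₂) + Df (x₁, x₂) (h₁, 0) + L₁ / 2 * ‖h₁‖ ^ 2)
    -- (P6): nonempty optimal set X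
    (X : Set (B₁ × B₂))
    (hX : X = {y ∈ S₁ ×ˢ S₂ | ∀ z ∈ S₁ ×ˢ S₂, objFun f g₁ g₂ y ≤ objFun f g₁ g₂ z})
    (hXne : X.Nonempty)
    -- projections onto X with respect to N
    (proj : B₁ × B₂ → B₁ × B₂)
    (hproj : ∀ z ∈ S₁ ×ˢ S₂, proj z ∈ X ∧ ∀ y ∈ X, N (z - proj z) ≤ N (z - y))
    -- (P8a): quasi-strong convexity of f with modulus σ > 0, and 0 < σβ₁/L₁ ≤ 1
    (σ : ℝ) (hσ : 0 < σ)
    (hqsc : ∀ z ∈ S₁ ×ˢ S₂,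
      f z + Df z (proj z - z) + σ / 2 * N (z - proj z) ^ 2 ≤ f (proj z))
    (hratio : σ * β₁ / L₁ ≤ 1)
    -- the point x and its projection
    (x : B₁ × B₂) (hx : x ∈ S₁ ×ˢ S₂) :
    f x - f (proj x) ≤
      L₁ / (σ * β₁) *
        (f x - f (x.1 + (σ * β₁ / L₁) • ((proj x).1 - x.1), x.2)) +
      Df x (0, x.2 - (proj x).2) :=
  stmt4_general f Df g₁ g₂ S₁ S₂ hS₁c N β₁ hβ₁ hN₁ L₁ hL₁pos hdesc₁ X hX proj hproj σ hσ hqsc hratio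
    x hx
end

section
/- For every k ≥ 0 the alternating minimization iterates satisfy H^k − H* ≤ [(1 − κβ₁/(8L₁))(1 − κβ₂/(8L₂))]^k (H⁰ − H*). -/
open Set

open Filter Topology

lemma aux_nonneg {A B : ℝ} (hB : 0 ≤ B) (h : ∀ t : ℝ, 0 < t → t ≤ 1 → 0 ≤ A + t * B) :
    0 ≤ A := by
  by_contra hA
  push_neg at hA
  have hpos : 0 < -A / (2 * B + 1) := div_pos (by linarith) (by linarith)
  have ht := h (min 1 (-A / (2 * B + 1))) (lt_min one_pos hpos) (min_le_left _ _)
  have h1 : min 1 (-A / (2 * B + 1)) * B ≤ -A / (2 * B + 1) * B :=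
    mul_le_mul_of_nonneg_right (min_le_right _ _) hB
  have h2 : -A / (2 * B + 1) * B ≤ -A / 2 := by
    rw [div_mul_eq_mul_div, div_le_div_iff₀ (by linarith) two_pos]
    nlinarith
  linarith

lemma grad_ineq {E : Type*} [NormedAddCommGroup E] [NormedSpace ℝ E]
    {S : Set E} {f : E → ℝ} (hf : ConvexOn ℝ S f) {x y : E} (hx : x ∈ S) (hy : y ∈ S)
    {D : E →L[ℝ] ℝ} (hD : HasFDerivWithinAt f D S x) : f x + D (y - x) ≤ f y := by
  have hmaps : MapsTo (fun t : ℝ => x + t • (y - x)) (Icc 0 1) S := fun t ht =>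
    hf.1.add_smul_sub_mem hx hy ht
  have hline : HasDerivWithinAt (fun t : ℝ => x + t • (y - x)) (y - x) (Icc 0 1) 0 := by
    simpa using ((hasDerivWithinAt_id (0:ℝ) (Icc 0 1)).smul_const (y - x)).const_add x
  have hφ : HasDerivWithinAt (f ∘ fun t : ℝ => x + t • (y - x)) (D (y - x)) (Icc 0 1) 0 :=
    hD.comp_hasDerivWithinAt_of_eq 0 hline hmaps (by simp)
  rw [hasDerivWithinAt_iff_tendsto_slope] at hφ
  have hIcc : (Icc (0:ℝ) 1) \ {0} = Ioc 0 1 := by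
    ext t
    simp only [mem_diff, mem_Icc, mem_singleton_iff, mem_Ioc]
    constructor
    · rintro ⟨⟨h0, h1⟩, hne⟩
      exact ⟨lt_of_le_of_ne h0 (Ne.symm hne), h1⟩
    · rintro ⟨h0, h1⟩
      exact ⟨⟨h0.le, h1⟩, ne_of_gt h0⟩
  rw [hIcc] at hφ
  haveI hne : (𝓝[Ioc (0:ℝ) 1] 0).NeBot := by
    rw [← mem_closure_iff_nhdsWithin_neBot, closure_Ioc (one_ne_zero).symm]
    exact ⟨le_refl 0, zero_le_one⟩
  have hev : ∀ᶠ t in 𝓝[Ioc (0:ℝ) 1] 0,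
      slope (f ∘ fun t : ℝ => x + t • (y - x)) 0 t ≤ f y - f x := by
    filter_upwards [self_mem_nhdsWithin] with t ht
    have hconv : f (x + t • (y - x)) ≤ (1 - t) * f x + t * f y := by
      have heq : (1 - t) • x + t • y = x + t • (y - x) := by
        rw [smul_sub, sub_smul, one_smul]; abel
      have := hf.2 hx hy (by linarith [ht.2] : (0:ℝ) ≤ 1 - t) ht.1.le (by ring)
      rwa [heq] at this
    rw [slope_def_field]
    simp only [Function.comp_apply, zero_smul, add_zero, sub_zero]
    rw [div_le_iff₀ ht.1]
    nlinarith [ht.1]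
  have := le_of_tendsto hφ hev
  linarith

set_option maxHeartbeats 1000000 in
private lemma key1
    {B₁ B₂ : Type*}
    [NormedAddCommGroup B₁] [NormedSpace ℝ B₁]
    [NormedAddCommGroup B₂] [NormedSpace ℝ B₂]
    (f : B₁ × B₂ → ℝ) (Df : B₁ × B₂ → (B₁ × B₂) →L[ℝ] ℝ)
    (g₁ : B₁ → ℝ) (g₂ : B₂ → ℝ) (S₁ : Set B₁) (S₂ : Set B₂)
    (hS₁c : Convex ℝ S₁) (hS₂c : Convex ℝ S₂)
    (hg₁conv : ConvexOn ℝ S₁ g₁) (hg₂conv : ConvexOn ℝ S₂ g₂)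
    (hfconv : ConvexOn ℝ (S₁ ×ˢ S₂) f)
    (hfdiff : ∀ x ∈ S₁ ×ˢ S₂, HasFDerivWithinAt f (Df x) (S₁ ×ˢ S₂) x)
    (N : B₁ × B₂ → ℝ) (β₁ β₂ : ℝ) (hβ₁ : 0 ≤ β₁) (hβ₂ : 0 ≤ β₂)
    (hNnonneg : ∀ z : B₁ × B₂, 0 ≤ N z)
    (hN₁ : ∀ z : B₁ × B₂, β₁ * ‖z.1‖ ^ 2 ≤ N z ^ 2)
    (L₁ L₂ : ℝ) (hL₁pos : 0 < L₁) (hL₂pos : 0 < L₂)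
    (hdesc₁ : ∀ x₁ ∈ S₁, ∀ x₂ ∈ S₂, ∀ h₁ : B₁, x₁ + h₁ ∈ S₁ →
      f (x₁ + h₁, x₂) ≤ f (x₁, x₂) + Df (x₁, x₂) (h₁, 0) + L₁ / 2 * ‖h₁‖ ^ 2)
    (hdesc₂ : ∀ x₁ ∈ S₁, ∀ x₂ ∈ S₂, ∀ h₂ : B₂, x₂ + h₂ ∈ S₂ →
      f (x₁, x₂ + h₂) ≤ f (x₁, x₂) + Df (x₁, x₂) (0, h₂) + L₂ / 2 * ‖h₂‖ ^ 2)
    (X : Set (B₁ × B₂))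
    (hX : X = {y ∈ S₁ ×ˢ S₂ | ∀ z ∈ S₁ ×ˢ S₂, objFun f g₁ g₂ y ≤ objFun f g₁ g₂ z})
    (Hstar : ℝ) (hHstar : ∀ y ∈ X, objFun f g₁ g₂ y = Hstar)
    (proj : B₁ × B₂ → B₁ × B₂)
    (hproj : ∀ z ∈ S₁ ×ˢ S₂, proj z ∈ X ∧ ∀ y ∈ X, N (z - proj z) ≤ N (z - y))
    (κ : ℝ) (hκ : 0 < κ)
    (hqg : ∀ z ∈ S₁ ×ˢ S₂,
      κ / 2 * N (z - proj z) ^ 2 ≤ objFun f g₁ g₂ z - Hstar)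
    (hκβ₁ : κ * β₁ ≤ 4 * L₁) :
    ∀ z ∈ S₁ ×ˢ S₂, (∀ y₂ ∈ S₂, objFun f g₁ g₂ z ≤ objFun f g₁ g₂ (z.1, y₂)) →
      ∀ w₁ ∈ S₁, (∀ y₁ ∈ S₁, objFun f g₁ g₂ (w₁, z.2) ≤ objFun f g₁ g₂ (y₁, z.2)) →
      objFun f g₁ g₂ (w₁, z.2) - Hstar ≤
        (1 - κ * β₁ / (8 * L₁)) * (objFun f g₁ g₂ z - Hstar) := by
  intro z hz hopt2 w₁ hw₁ hmin1
  have hz1 : z.1 ∈ S₁ := hz.1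
  have hz2 : z.2 ∈ S₂ := hz.2
  obtain ⟨hpX, -⟩ := hproj z hz
  have hpS : proj z ∈ S₁ ×ˢ S₂ := by rw [hX] at hpX; exact hpX.1
  have hpH : objFun f g₁ g₂ (proj z) = Hstar := hHstar _ hpX
  have hΔ : 0 ≤ objFun f g₁ g₂ z - Hstar := by
    have h0 : (0:ℝ) ≤ κ / 2 * N (z - proj z) ^ 2 := by positivity
    linarith [hqg z hz]
  -- Step A : first-order optimality in the second block
  have stepA : 0 ≤ Df z (0, (proj z).2 - z.2) + (g₂ (proj z).2 - g₂ z.2) := by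
    apply aux_nonneg (B := L₂ / 2 * ‖(proj z).2 - z.2‖ ^ 2) (by positivity)
    intro t ht0 ht1
    have hmem : z.2 + t • ((proj z).2 - z.2) ∈ S₂ :=
      hS₂c.add_smul_sub_mem hz2 hpS.2 ⟨ht0.le, ht1⟩
    have h1 := hopt2 _ hmem
    have h2 := hdesc₂ z.1 hz1 z.2 hz2 (t • ((proj z).2 - z.2)) hmem
    have h3 : g₂ (z.2 + t • ((proj z).2 - z.2)) ≤ (1 - t) * g₂ z.2 + t * g₂ (proj z).2 := by
      have heq : (1 - t) • z.2 + t • (proj z).2 = z.2 + t • ((proj z).2 - z.2) := by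
        rw [smul_sub, sub_smul, one_smul]; abel
      have := hg₂conv.2 hz2 hpS.2 (by linarith : (0:ℝ) ≤ 1 - t) ht0.le (by ring)
      rwa [heq] at this
    have h4 : Df z ((0 : B₁), t • ((proj z).2 - z.2)) = t * Df z (0, (proj z).2 - z.2) := by
      have he : ((0 : B₁), t • ((proj z).2 - z.2)) = t • ((0 : B₁), (proj z).2 - z.2) := by
        simp [Prod.smul_mk]
      rw [he, map_smul, smul_eq_mul]
    have h5 : ‖t • ((proj z).2 - z.2)‖ ^ 2 = t ^ 2 * ‖(proj z).2 - z.2‖ ^ 2 := by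
      rw [norm_smul, Real.norm_eq_abs, abs_of_nonneg ht0.le, mul_pow]
    simp only [objFun] at h1
    simp only [Prod.mk.eta] at h2
    rw [h4, h5] at h2
    nlinarith [h1, h2, h3, ht0, ht1]
  -- Step B : gradient inequality for f
  have stepB : f z + Df z (proj z - z) ≤ f (proj z) :=
    grad_ineq hfconv hz hpS (hfdiff z hz)
  have hsplit : Df z ((proj z).1 - z.1, 0) + Df z (0, (proj z).2 - z.2) = Df z (proj z - z) := by
    rw [← map_add]
    congr 1
    simp [Prod.ext_iff]
  have hA1 : Df z ((proj z).1 - z.1, 0) + (g₁ (proj z).1 - g₁ z.1) ≤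
      -(objFun f g₁ g₂ z - Hstar) := by
    have hobjp : objFun f g₁ g₂ (proj z) = f (proj z) + g₁ (proj z).1 + g₂ (proj z).2 := rfl
    have hobjz : objFun f g₁ g₂ z = f z + g₁ z.1 + g₂ z.2 := rfl
    linarith [stepA, stepB]
  -- Step C : descent step in the first block
  have hγ0 : 0 ≤ κ * β₁ / (4 * L₁) := by positivity
  have hγ1 : κ * β₁ / (4 * L₁) ≤ 1 := by
    rw [div_le_one (by positivity)]; linarith
  set γ := κ * β₁ / (4 * L₁) with hγdef
  have hmem1 : z.1 + γ • ((proj z).1 - z.1) ∈ S₁ :=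
    hS₁c.add_smul_sub_mem hz1 hpS.1 ⟨hγ0, hγ1⟩
  have hd := hdesc₁ z.1 hz1 z.2 hz2 (γ • ((proj z).1 - z.1)) hmem1
  have hg : g₁ (z.1 + γ • ((proj z).1 - z.1)) ≤ (1 - γ) * g₁ z.1 + γ * g₁ (proj z).1 := by
    have heq : (1 - γ) • z.1 + γ • (proj z).1 = z.1 + γ • ((proj z).1 - z.1) := by
      rw [smul_sub, sub_smul, one_smul]; abel
    have := hg₁conv.2 hz1 hpS.1 (by linarith : (0:ℝ) ≤ 1 - γ) hγ0 (by ring)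
    rwa [heq] at this
  have hmin := hmin1 _ hmem1
  have h4 : Df z (γ • ((proj z).1 - z.1), (0 : B₂)) = γ * Df z ((proj z).1 - z.1, 0) := by
    have he : (γ • ((proj z).1 - z.1), (0 : B₂)) = γ • (((proj z).1 - z.1), (0 : B₂)) := by
      simp [Prod.smul_mk]
    rw [he, map_smul, smul_eq_mul]
  have h5 : ‖γ • ((proj z).1 - z.1)‖ ^ 2 = γ ^ 2 * ‖(proj z).1 - z.1‖ ^ 2 := by
    rw [norm_smul, Real.norm_eq_abs, abs_of_nonneg hγ0, mul_pow]
  simp only [Prod.mk.eta] at hd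
  rw [h4, h5] at hd
  have hnorm : κ * (β₁ * ‖(proj z).1 - z.1‖ ^ 2) ≤ 2 * (objFun f g₁ g₂ z - Hstar) := by
    have h6 := hN₁ (z - proj z)
    have h7 := hqg z hz
    have h8 : ‖(z - proj z).1‖ = ‖(proj z).1 - z.1‖ := by
      show ‖z.1 - (proj z).1‖ = _
      rw [norm_sub_rev]
    rw [h8] at h6
    nlinarith [h6, h7, hκ.le]
  have hterm : γ ^ 2 * (L₁ / 2) * ‖(proj z).1 - z.1‖ ^ 2 ≤ γ * (objFun f g₁ g₂ z - Hstar) / 4 := by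
    have hq0 : 0 ≤ β₁ * ‖(proj z).1 - z.1‖ ^ 2 := by positivity
    have hteq : γ ^ 2 * (L₁ / 2) * ‖(proj z).1 - z.1‖ ^ 2 =
        γ * ((κ / 8) * (β₁ * ‖(proj z).1 - z.1‖ ^ 2)) := by
      rw [hγdef]; field_simp; ring
    rw [hteq]
    have h10 : (κ / 8) * (β₁ * ‖(proj z).1 - z.1‖ ^ 2) ≤ (objFun f g₁ g₂ z - Hstar) / 4 := by
      linarith
    calc γ * ((κ / 8) * (β₁ * ‖(proj z).1 - z.1‖ ^ 2)) ≤
        γ * ((objFun f g₁ g₂ z - Hstar) / 4) := mul_le_mul_of_nonneg_left h10 hγ0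
      _ = γ * (objFun f g₁ g₂ z - Hstar) / 4 := by ring
  have hmul : γ * (Df z ((proj z).1 - z.1, 0) + (g₁ (proj z).1 - g₁ z.1)) ≤
      γ * (-(objFun f g₁ g₂ z - Hstar)) := mul_le_mul_of_nonneg_left hA1 hγ0
  have hcoef : 1 - κ * β₁ / (8 * L₁) = 1 - γ / 2 := by
    rw [hγdef]; field_simp; ring
  rw [hcoef]
  have hγΔ : 0 ≤ γ * (objFun f g₁ g₂ z - Hstar) := mul_nonneg hγ0 hΔ
  simp only [objFun] at hmin hΔ hmul hterm hγΔ ⊢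
  linarith [hmin, hd, hg, hmul, hterm, hγΔ]

set_option maxHeartbeats 1000000 in
private lemma key2
    {B₁ B₂ : Type*}
    [NormedAddCommGroup B₁] [NormedSpace ℝ B₁]
    [NormedAddCommGroup B₂] [NormedSpace ℝ B₂]
    (f : B₁ × B₂ → ℝ) (Df : B₁ × B₂ → (B₁ × B₂) →L[ℝ] ℝ)
    (g₁ : B₁ → ℝ) (g₂ : B₂ → ℝ) (S₁ : Set B₁) (S₂ : Set B₂)
    (hS₁c : Convex ℝ S₁) (hS₂c : Convex ℝ S₂)
    (hg₁conv : ConvexOn ℝ S₁ g₁) (hg₂conv : ConvexOn ℝ S₂ g₂)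
    (hfconv : ConvexOn ℝ (S₁ ×ˢ S₂) f)
    (hfdiff : ∀ x ∈ S₁ ×ˢ S₂, HasFDerivWithinAt f (Df x) (S₁ ×ˢ S₂) x)
    (N : B₁ × B₂ → ℝ) (β₁ β₂ : ℝ) (hβ₁ : 0 ≤ β₁) (hβ₂ : 0 ≤ β₂)
    (hNnonneg : ∀ z : B₁ × B₂, 0 ≤ N z)
    (hN₂ : ∀ z : B₁ × B₂, β₂ * ‖z.2‖ ^ 2 ≤ N z ^ 2)
    (L₁ L₂ : ℝ) (hL₁pos : 0 < L₁) (hL₂pos : 0 < L₂)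
    (hdesc₁ : ∀ x₁ ∈ S₁, ∀ x₂ ∈ S₂, ∀ h₁ : B₁, x₁ + h₁ ∈ S₁ →
      f (x₁ + h₁, x₂) ≤ f (x₁, x₂) + Df (x₁, x₂) (h₁, 0) + L₁ / 2 * ‖h₁‖ ^ 2)
    (hdesc₂ : ∀ x₁ ∈ S₁, ∀ x₂ ∈ S₂, ∀ h₂ : B₂, x₂ + h₂ ∈ S₂ →
      f (x₁, x₂ + h₂) ≤ f (x₁, x₂) + Df (x₁, x₂) (0, h₂) + L₂ / 2 * ‖h₂‖ ^ 2)
    (X : Set (B₁ × B₂))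
    (hX : X = {y ∈ S₁ ×ˢ S₂ | ∀ z ∈ S₁ ×ˢ S₂, objFun f g₁ g₂ y ≤ objFun f g₁ g₂ z})
    (Hstar : ℝ) (hHstar : ∀ y ∈ X, objFun f g₁ g₂ y = Hstar)
    (proj : B₁ × B₂ → B₁ × B₂)
    (hproj : ∀ z ∈ S₁ ×ˢ S₂, proj z ∈ X ∧ ∀ y ∈ X, N (z - proj z) ≤ N (z - y))
    (κ : ℝ) (hκ : 0 < κ)
    (hqg : ∀ z ∈ S₁ ×ˢ S₂,
      κ / 2 * N (z - proj z) ^ 2 ≤ objFun f g₁ g₂ z - Hstar)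
    (hκβ₂ : κ * β₂ ≤ 4 * L₂) :
    ∀ z ∈ S₁ ×ˢ S₂, (∀ y₁ ∈ S₁, objFun f g₁ g₂ z ≤ objFun f g₁ g₂ (y₁, z.2)) →
      ∀ w₂ ∈ S₂, (∀ y₂ ∈ S₂, objFun f g₁ g₂ (z.1, w₂) ≤ objFun f g₁ g₂ (z.1, y₂)) →
      objFun f g₁ g₂ (z.1, w₂) - Hstar ≤
        (1 - κ * β₂ / (8 * L₂)) * (objFun f g₁ g₂ z - Hstar) := by
  intro z hz hopt1 w₂ hw₂ hmin2
  have hz1 : z.1 ∈ S₁ := hz.1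
  have hz2 : z.2 ∈ S₂ := hz.2
  obtain ⟨hpX, -⟩ := hproj z hz
  have hpS : proj z ∈ S₁ ×ˢ S₂ := by rw [hX] at hpX; exact hpX.1
  have hpH : objFun f g₁ g₂ (proj z) = Hstar := hHstar _ hpX
  have hΔ : 0 ≤ objFun f g₁ g₂ z - Hstar := by
    have h0 : (0:ℝ) ≤ κ / 2 * N (z - proj z) ^ 2 := by positivity
    linarith [hqg z hz]
  -- Step A : first-order optimality in the first block
  have stepA : 0 ≤ Df z ((proj z).1 - z.1, 0) + (g₁ (proj z).1 - g₁ z.1) := by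
    apply aux_nonneg (B := L₁ / 2 * ‖(proj z).1 - z.1‖ ^ 2) (by positivity)
    intro t ht0 ht1
    have hmem : z.1 + t • ((proj z).1 - z.1) ∈ S₁ :=
      hS₁c.add_smul_sub_mem hz1 hpS.1 ⟨ht0.le, ht1⟩
    have h1 := hopt1 _ hmem
    have h2 := hdesc₁ z.1 hz1 z.2 hz2 (t • ((proj z).1 - z.1)) hmem
    have h3 : g₁ (z.1 + t • ((proj z).1 - z.1)) ≤ (1 - t) * g₁ z.1 + t * g₁ (proj z).1 := by
      have heq : (1 - t) • z.1 + t • (proj z).1 = z.1 + t • ((proj z).1 - z.1) := by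
        rw [smul_sub, sub_smul, one_smul]; abel
      have := hg₁conv.2 hz1 hpS.1 (by linarith : (0:ℝ) ≤ 1 - t) ht0.le (by ring)
      rwa [heq] at this
    have h4 : Df z (t • ((proj z).1 - z.1), (0 : B₂)) = t * Df z ((proj z).1 - z.1, 0) := by
      have he : (t • ((proj z).1 - z.1), (0 : B₂)) = t • (((proj z).1 - z.1), (0 : B₂)) := by
        simp [Prod.smul_mk]
      rw [he, map_smul, smul_eq_mul]
    have h5 : ‖t • ((proj z).1 - z.1)‖ ^ 2 = t ^ 2 * ‖(proj z).1 - z.1‖ ^ 2 := by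
      rw [norm_smul, Real.norm_eq_abs, abs_of_nonneg ht0.le, mul_pow]
    simp only [objFun] at h1
    simp only [Prod.mk.eta] at h2
    rw [h4, h5] at h2
    nlinarith [h1, h2, h3, ht0, ht1]
  -- Step B : gradient inequality for f
  have stepB : f z + Df z (proj z - z) ≤ f (proj z) :=
    grad_ineq hfconv hz hpS (hfdiff z hz)
  have hsplit : Df z ((proj z).1 - z.1, 0) + Df z (0, (proj z).2 - z.2) = Df z (proj z - z) := by
    rw [← map_add]
    congr 1
    simp [Prod.ext_iff]
  have hA1 : Df z (0, (proj z).2 - z.2) + (g₂ (proj z).2 - g₂ z.2) ≤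
      -(objFun f g₁ g₂ z - Hstar) := by
    have hobjp : objFun f g₁ g₂ (proj z) = f (proj z) + g₁ (proj z).1 + g₂ (proj z).2 := rfl
    have hobjz : objFun f g₁ g₂ z = f z + g₁ z.1 + g₂ z.2 := rfl
    linarith [stepA, stepB]
  -- Step C : descent step in the second block
  have hγ0 : 0 ≤ κ * β₂ / (4 * L₂) := by positivity
  have hγ1 : κ * β₂ / (4 * L₂) ≤ 1 := by
    rw [div_le_one (by positivity)]; linarith
  set γ := κ * β₂ / (4 * L₂) with hγdef
  have hmem2 : z.2 + γ • ((proj z).2 - z.2) ∈ S₂ :=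
    hS₂c.add_smul_sub_mem hz2 hpS.2 ⟨hγ0, hγ1⟩
  have hd := hdesc₂ z.1 hz1 z.2 hz2 (γ • ((proj z).2 - z.2)) hmem2
  have hg : g₂ (z.2 + γ • ((proj z).2 - z.2)) ≤ (1 - γ) * g₂ z.2 + γ * g₂ (proj z).2 := by
    have heq : (1 - γ) • z.2 + γ • (proj z).2 = z.2 + γ • ((proj z).2 - z.2) := by
      rw [smul_sub, sub_smul, one_smul]; abel
    have := hg₂conv.2 hz2 hpS.2 (by linarith : (0:ℝ) ≤ 1 - γ) hγ0 (by ring)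
    rwa [heq] at this
  have hmin := hmin2 _ hmem2
  have h4 : Df z ((0 : B₁), γ • ((proj z).2 - z.2)) = γ * Df z (0, (proj z).2 - z.2) := by
    have he : ((0 : B₁), γ • ((proj z).2 - z.2)) = γ • ((0 : B₁), ((proj z).2 - z.2)) := by
      simp [Prod.smul_mk]
    rw [he, map_smul, smul_eq_mul]
  have h5 : ‖γ • ((proj z).2 - z.2)‖ ^ 2 = γ ^ 2 * ‖(proj z).2 - z.2‖ ^ 2 := by
    rw [norm_smul, Real.norm_eq_abs, abs_of_nonneg hγ0, mul_pow]
  simp only [Prod.mk.eta] at hd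
  rw [h4, h5] at hd
  have hnorm : κ * (β₂ * ‖(proj z).2 - z.2‖ ^ 2) ≤ 2 * (objFun f g₁ g₂ z - Hstar) := by
    have h6 := hN₂ (z - proj z)
    have h7 := hqg z hz
    have h8 : ‖(z - proj z).2‖ = ‖(proj z).2 - z.2‖ := by
      show ‖z.2 - (proj z).2‖ = _
      rw [norm_sub_rev]
    rw [h8] at h6
    nlinarith [h6, h7, hκ.le]
  have hterm : γ ^ 2 * (L₂ / 2) * ‖(proj z).2 - z.2‖ ^ 2 ≤ γ * (objFun f g₁ g₂ z - Hstar) / 4 := by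
    have hq0 : 0 ≤ β₂ * ‖(proj z).2 - z.2‖ ^ 2 := by positivity
    have hteq : γ ^ 2 * (L₂ / 2) * ‖(proj z).2 - z.2‖ ^ 2 =
        γ * ((κ / 8) * (β₂ * ‖(proj z).2 - z.2‖ ^ 2)) := by
      rw [hγdef]; field_simp; ring
    rw [hteq]
    have h10 : (κ / 8) * (β₂ * ‖(proj z).2 - z.2‖ ^ 2) ≤ (objFun f g₁ g₂ z - Hstar) / 4 := by
      linarith
    calc γ * ((κ / 8) * (β₂ * ‖(proj z).2 - z.2‖ ^ 2)) ≤
        γ * ((objFun f g₁ g₂ z - Hstar) / 4) := mul_le_mul_of_nonneg_left h10 hγ0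
      _ = γ * (objFun f g₁ g₂ z - Hstar) / 4 := by ring
  have hmul : γ * (Df z (0, (proj z).2 - z.2) + (g₂ (proj z).2 - g₂ z.2)) ≤
      γ * (-(objFun f g₁ g₂ z - Hstar)) := mul_le_mul_of_nonneg_left hA1 hγ0
  have hcoef : 1 - κ * β₂ / (8 * L₂) = 1 - γ / 2 := by
    rw [hγdef]; field_simp; ring
  rw [hcoef]
  have hγΔ : 0 ≤ γ * (objFun f g₁ g₂ z - Hstar) := mul_nonneg hγ0 hΔ
  simp only [objFun] at hmin hΔ hmul hterm hγΔ ⊢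
  linarith [hmin, hd, hg, hmul, hterm, hγΔ]

/-- linear convergence of alternating minimization under quadratic
functional growth: for every `k ≥ 0`,
`H^k - H* ≤ [(1 - κβ₁/(8L₁)) (1 - κβ₂/(8L₂))]^k (H⁰ - H*)`. -/
theorem stmt5
    {B₁ B₂ : Type*}
    [NormedAddCommGroup B₁] [NormedSpace ℝ B₁] [CompleteSpace B₁]
    [NormedAddCommGroup B₂] [NormedSpace ℝ B₂] [CompleteSpace B₂]
    (f : B₁ × B₂ → ℝ) (Df : B₁ × B₂ → (B₁ × B₂) →L[ℝ] ℝ)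
    (g₁ : B₁ → ℝ) (g₂ : B₂ → ℝ) (S₁ : Set B₁) (S₂ : Set B₂)
    -- (P3): g₁, g₂ proper convex, subdifferentiable on their domains
    (hS₁c : Convex ℝ S₁) (hS₂c : Convex ℝ S₂)
    (hS₁ne : S₁.Nonempty) (hS₂ne : S₂.Nonempty)
    (hg₁conv : ConvexOn ℝ S₁ g₁) (hg₂conv : ConvexOn ℝ S₂ g₂)
    (hg₁sub : ∀ x₁ ∈ S₁, ∃ d : B₁ →L[ℝ] ℝ, ∀ y₁ ∈ S₁, g₁ x₁ + d (y₁ - x₁) ≤ g₁ y₁)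
    (hg₂sub : ∀ x₂ ∈ S₂, ∃ d : B₂ →L[ℝ] ℝ, ∀ y₂ ∈ S₂, g₂ x₂ + d (y₂ - x₂) ≤ g₂ y₂)
    -- (P4): f convex and Fréchet differentiable on dom g₁ × dom g₂, with derivative Df
    (hfconv : ConvexOn ℝ (S₁ ×ˢ S₂) f)
    (hfdiff : ∀ x ∈ S₁ ×ˢ S₂, HasFDerivWithinAt f (Df x) (S₁ ×ˢ S₂) x)
    -- (P2): a norm `N` on the product space and the constants β₁, β₂
    (N : B₁ × B₂ → ℝ) (β₁ β₂ : ℝ) (hβ₁ : 0 ≤ β₁) (hβ₂ : 0 ≤ β₂)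
    (hNnonneg : ∀ z : B₁ × B₂, 0 ≤ N z)
    (hN₁ : ∀ z : B₁ × B₂, β₁ * ‖z.1‖ ^ 2 ≤ N z ^ 2)
    (hN₂ : ∀ z : B₁ × B₂, β₂ * ‖z.2‖ ^ 2 ≤ N z ^ 2)
    -- (P5): block Lipschitz continuity of the partial derivatives, with finite
    -- constants L₁, L₂ > 0, together with the (equivalent) block descent inequalities
    (L₁ L₂ : ℝ) (hL₁pos : 0 < L₁) (hL₂pos : 0 < L₂)
    (hlip₁ : ∀ x₁ ∈ S₁, ∀ x₂ ∈ S₂, ∀ h₁ : B₁, x₁ + h₁ ∈ S₁ →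
      ‖(Df (x₁ + h₁, x₂)).comp (ContinuousLinearMap.inl ℝ B₁ B₂) -
        (Df (x₁, x₂)).comp (ContinuousLinearMap.inl ℝ B₁ B₂)‖ ≤ L₁ * ‖h₁‖)
    (hlip₂ : ∀ x₁ ∈ S₁, ∀ x₂ ∈ S₂, ∀ h₂ : B₂, x₂ + h₂ ∈ S₂ →
      ‖(Df (x₁, x₂ + h₂)).comp (ContinuousLinearMap.inr ℝ B₁ B₂) -
        (Df (x₁, x₂)).comp (ContinuousLinearMap.inr ℝ B₁ B₂)‖ ≤ L₂ * ‖h₂‖)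
    (hdesc₁ : ∀ x₁ ∈ S₁, ∀ x₂ ∈ S₂, ∀ h₁ : B₁, x₁ + h₁ ∈ S₁ →
      f (x₁ + h₁, x₂) ≤ f (x₁, x₂) + Df (x₁, x₂) (h₁, 0) + L₁ / 2 * ‖h₁‖ ^ 2)
    (hdesc₂ : ∀ x₁ ∈ S₁, ∀ x₂ ∈ S₂, ∀ h₂ : B₂, x₂ + h₂ ∈ S₂ →
      f (x₁, x₂ + h₂) ≤ f (x₁, x₂) + Df (x₁, x₂) (0, h₂) + L₂ / 2 * ‖h₂‖ ^ 2)
    -- (P6): nonempty optimal set X with optimal value H*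
    (X : Set (B₁ × B₂))
    (hX : X = {y ∈ S₁ ×ˢ S₂ | ∀ z ∈ S₁ ×ˢ S₂, objFun f g₁ g₂ y ≤ objFun f g₁ g₂ z})
    (hXne : X.Nonempty)
    (Hstar : ℝ) (hHstar : ∀ y ∈ X, objFun f g₁ g₂ y = Hstar)
    -- projections onto X with respect to N
    (proj : B₁ × B₂ → B₁ × B₂)
    (hproj : ∀ z ∈ S₁ ×ˢ S₂, proj z ∈ X ∧ ∀ y ∈ X, N (z - proj z) ≤ N (z - y))
    -- (P8b): quadratic functional growth of H with modulus κ > 0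
    (κ : ℝ) (hκ : 0 < κ)
    (hqg : ∀ z ∈ S₁ ×ˢ S₂,
      κ / 2 * N (z - proj z) ^ 2 ≤ objFun f g₁ g₂ z - Hstar)
    (hκβ₁ : κ * β₁ ≤ 4 * L₁) (hκβ₂ : κ * β₂ ≤ 4 * L₂)
    -- the alternating minimization sequence
    (x : ℕ → B₁ × B₂)
    (hx0 : x 0 ∈ S₁ ×ˢ S₂)
    (hinit : ∀ y₂ ∈ S₂, objFun f g₁ g₂ (x 0) ≤ objFun f g₁ g₂ ((x 0).1, y₂))
    (hstep1 : ∀ k : ℕ, (x (k + 1)).1 ∈ S₁ ∧ ∀ y₁ ∈ S₁,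
      objFun f g₁ g₂ ((x (k + 1)).1, (x k).2) ≤ objFun f g₁ g₂ (y₁, (x k).2))
    (hstep2 : ∀ k : ℕ, (x (k + 1)).2 ∈ S₂ ∧ ∀ y₂ ∈ S₂,
      objFun f g₁ g₂ (x (k + 1)) ≤ objFun f g₁ g₂ ((x (k + 1)).1, y₂)) :
    ∀ k : ℕ,
      objFun f g₁ g₂ (x k) - Hstar ≤
        ((1 - κ * β₁ / (8 * L₁)) * (1 - κ * β₂ / (8 * L₂))) ^ k *
          (objFun f g₁ g₂ (x 0) - Hstar) := by

  have hxS : ∀ k : ℕ, x k ∈ S₁ ×ˢ S₂ := by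
    intro k
    cases k with
    | zero => exact hx0
    | succ n => exact ⟨(hstep1 n).1, (hstep2 n).1⟩
  have hc₁ : 0 ≤ 1 - κ * β₁ / (8 * L₁) := by
    rw [sub_nonneg, div_le_one (by positivity)]; linarith
  have hc₂ : 0 ≤ 1 - κ * β₂ / (8 * L₂) := by
    rw [sub_nonneg, div_le_one (by positivity)]; linarith
  intro k
  induction k with
  | zero => simp
  | succ n ih =>
    have hzS := hxS n
    have hopt2 : ∀ y₂ ∈ S₂, objFun f g₁ g₂ (x n) ≤ objFun f g₁ g₂ ((x n).1, y₂) := by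
      cases n with
      | zero => exact hinit
      | succ m => exact (hstep2 m).2
    have s1 := key1 f Df g₁ g₂ S₁ S₂ hS₁c hS₂c hg₁conv hg₂conv hfconv hfdiff N β₁ β₂ hβ₁ hβ₂
      hNnonneg hN₁ L₁ L₂ hL₁pos hL₂pos hdesc₁ hdesc₂ X hX Hstar hHstar proj hproj κ hκ hqg hκβ₁
      (x n) hzS hopt2 ((x (n + 1)).1) (hstep1 n).1 (hstep1 n).2
    have hz'S : ((x (n + 1)).1, (x n).2) ∈ S₁ ×ˢ S₂ := ⟨(hstep1 n).1, hzS.2⟩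
    have hopt1 : ∀ y₁ ∈ S₁, objFun f g₁ g₂ ((x (n + 1)).1, (x n).2) ≤
        objFun f g₁ g₂ (y₁, ((x (n + 1)).1, (x n).2).2) := fun y₁ hy₁ => (hstep1 n).2 y₁ hy₁
    have s2 := key2 f Df g₁ g₂ S₁ S₂ hS₁c hS₂c hg₁conv hg₂conv hfconv hfdiff N β₁ β₂ hβ₁ hβ₂
      hNnonneg hN₂ L₁ L₂ hL₁pos hL₂pos hdesc₁ hdesc₂ X hX Hstar hHstar proj hproj κ hκ hqg hκβ₂
      ((x (n + 1)).1, (x n).2) hz'S hopt1 ((x (n + 1)).2) (hstep2 n).1 (hstep2 n).2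
    have e : (((x (n + 1)).1, (x n).2).1, (x (n + 1)).2) = x (n + 1) := rfl
    rw [e] at s2
    calc objFun f g₁ g₂ (x (n + 1)) - Hstar
        ≤ (1 - κ * β₂ / (8 * L₂)) * (objFun f g₁ g₂ ((x (n + 1)).1, (x n).2) - Hstar) := s2
      _ ≤ (1 - κ * β₂ / (8 * L₂)) *
          ((1 - κ * β₁ / (8 * L₁)) * (objFun f g₁ g₂ (x n) - Hstar)) :=
        mul_le_mul_of_nonneg_left s1 hc₂
      _ ≤ (1 - κ * β₂ / (8 * L₂)) * ((1 - κ * β₁ / (8 * L₁)) *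
          (((1 - κ * β₁ / (8 * L₁)) * (1 - κ * β₂ / (8 * L₂))) ^ n *
            (objFun f g₁ g₂ (x 0) - Hstar))) :=
        mul_le_mul_of_nonneg_left (mul_le_mul_of_nonneg_left ih hc₁) hc₂
      _ = ((1 - κ * β₁ / (8 * L₁)) * (1 - κ * β₂ / (8 * L₂))) ^ (n + 1) *
          (objFun f g₁ g₂ (x 0) - Hstar) := by ring
end

section
/- For every k ≥ 0 the half-step of the alternating minimization contracts: H^{k+1/2} − H* ≤ (1 − κβ₁/(8L₁))(H^k − H*), where H^{k+1/2} = H(x₁^{k+1}, x₂^k). -/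
/-!
Compare the block-1 minimizer with the trial point `x₁ᵏ + t (x̄₁ - x₁ᵏ)`, where `x̄` is the
projection of `xᵏ` onto the solution set. The descent lemma in the first block, convexity of `f`
and `g₁`, and first-order optimality of `x₂ᵏ` in the second block give
`H(trial, x₂ᵏ) ≤ Hᵏ - t (Hᵏ - H*) + (L₁/2) t² ‖x̄₁ - x₁ᵏ‖²`, and quadratic growth bounds the last
term by `(t/4) (Hᵏ - H*)` once `t = κβ₁/(4L₁) ≤ 1`.
-/

open Set

open Filter Topology

section Segment

variable {E : Type*} [NormedAddCommGroup E] [NormedSpace ℝ E] {S : Set E} {x y : E}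

lemma ConvexOn.apply_add_smul_sub_le {f : E → ℝ} (hf : ConvexOn ℝ S f) (hx : x ∈ S) (hy : y ∈ S)
    {t : ℝ} (ht : t ∈ Icc (0 : ℝ) 1) :
    f (x + t • (y - x)) ≤ (1 - t) * f x + t * f y := by
  have hcomb : x + t • (y - x) = (1 - t) • x + t • y := by
    rw [smul_sub, sub_smul, one_smul]; abel
  simpa only [hcomb, smul_eq_mul] using hf.2 hx hy (sub_nonneg.2 ht.2) ht.1 (sub_add_cancel 1 t)

lemma HasFDerivWithinAt.hasDerivWithinAt_segment {f : E → ℝ} {f' : E →L[ℝ] ℝ}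
    (hS : Convex ℝ S) (hx : x ∈ S) (hy : y ∈ S) {t : ℝ}
    (hf : HasFDerivWithinAt f f' S (x + t • (y - x))) :
    HasDerivWithinAt (fun s : ℝ => f (x + s • (y - x))) (f' (y - x)) (Icc 0 1) t := by
  have hline : HasDerivAt (fun s : ℝ => x + s • (y - x)) (y - x) t := by
    simpa using ((hasDerivAt_id t).smul_const (y - x)).const_add x
  exact hf.comp_hasDerivWithinAt t hline.hasDerivWithinAt
    fun s hs => hS.add_smul_sub_mem hx hy hs

lemma HasFDerivWithinAt.tendsto_slope_segment {f : E → ℝ} {f' : E →L[ℝ] ℝ}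
    (hS : Convex ℝ S) (hx : x ∈ S) (hy : y ∈ S) (hf : HasFDerivWithinAt f f' S x) :
    Tendsto (fun t : ℝ => (f (x + t • (y - x)) - f x) / t) (𝓝[>] 0) (𝓝 (f' (y - x))) := by
  have hd := (HasFDerivWithinAt.hasDerivWithinAt_segment (t := 0) hS hx hy
    (by rwa [zero_smul, add_zero])).mono_of_mem_nhdsWithin (Icc_mem_nhdsGT zero_lt_one)
  rw [hasDerivWithinAt_iff_tendsto_slope' (by simp)] at hd
  refine hd.congr fun t => ?_
  rw [slope_def_field, zero_smul, add_zero, sub_zero]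

lemma ConvexOn.add_fderiv_le {f : E → ℝ} {f' : E →L[ℝ] ℝ} (hf : ConvexOn ℝ S f)
    (hd : HasFDerivWithinAt f f' S x) (hx : x ∈ S) (hy : y ∈ S) :
    f x + f' (y - x) ≤ f y := by
  suffices f' (y - x) ≤ f y - f x by linarith
  refine le_of_tendsto (hd.tendsto_slope_segment hf.1 hx hy) ?_
  filter_upwards [Ioc_mem_nhdsGT zero_lt_one] with t ht
  rw [div_le_iff₀ ht.1]
  linear_combination hf.apply_add_smul_sub_le hx hy ⟨ht.1.le, ht.2⟩

lemma IsMinOn.sub_le_fderiv_of_convexOn {f g : E → ℝ} {f' : E →L[ℝ] ℝ}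
    (hmin : IsMinOn (fun z => f z + g z) S x) (hg : ConvexOn ℝ S g)
    (hd : HasFDerivWithinAt f f' S x) (hx : x ∈ S) (hy : y ∈ S) :
    g x - g y ≤ f' (y - x) := by
  refine ge_of_tendsto (hd.tendsto_slope_segment hg.1 hx hy) ?_
  filter_upwards [Ioc_mem_nhdsGT zero_lt_one] with t ht
  rw [le_div_iff₀ ht.1]
  have hmin_t : f x + g x ≤ f (x + t • (y - x)) + g (x + t • (y - x)) :=
    hmin (hg.1.add_smul_sub_mem hx hy ⟨ht.1.le, ht.2⟩)
  linear_combination hmin_t + hg.apply_add_smul_sub_le hx hy ⟨ht.1.le, ht.2⟩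

theorem Convex.apply_le_tangent_add_sq {f : E → ℝ} {f' : E → E →L[ℝ] ℝ} {L : ℝ}
    (hS : Convex ℝ S) (hf : ∀ z ∈ S, HasFDerivWithinAt f (f' z) S z)
    (hL : ∀ z ∈ S, ‖f' z - f' x‖ ≤ L * ‖z - x‖) (hx : x ∈ S) (hy : y ∈ S) :
    f y ≤ f x + f' x (y - x) + L / 2 * ‖y - x‖ ^ 2 := by
  set d := y - x
  set ψ : ℝ → ℝ := fun s => f (x + s • d) - (s * f' x d + L / 2 * ‖d‖ ^ 2 * s ^ 2)
  have hψ : ∀ s ∈ Icc (0 : ℝ) 1, HasDerivWithinAt ψ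
      (f' (x + s • d) d - (f' x d + L / 2 * ‖d‖ ^ 2 * (2 * s))) (Icc 0 1) s := by
    intro s hs
    have hf_s := (hf _ (hS.add_smul_sub_mem hx hy hs)).hasDerivWithinAt_segment hS hx hy
    have hpoly : HasDerivAt (fun s : ℝ => s * f' x d + L / 2 * ‖d‖ ^ 2 * s ^ 2)
        (f' x d + L / 2 * ‖d‖ ^ 2 * (2 * s)) s := by
      refine (((hasDerivAt_id' s).mul_const (f' x d)).add
        ((hasDerivAt_pow 2 s).const_mul (L / 2 * ‖d‖ ^ 2))).congr_deriv ?_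
      push_cast; ring
    exact hf_s.sub hpoly.hasDerivWithinAt
  have hanti : AntitoneOn ψ (Icc 0 1) := by
    refine antitoneOn_of_hasDerivWithinAt_nonpos (convex_Icc 0 1)
      (fun s hs => (hψ s hs).continuousWithinAt)
      (fun s hs => (hψ s (interior_subset hs)).mono interior_subset) fun s hs => ?_
    rw [interior_Icc] at hs
    have hz := hS.add_smul_sub_mem hx hy (Ioo_subset_Icc_self hs)
    have hnorm : ‖x + s • d - x‖ = s * ‖d‖ := by
      rw [add_sub_cancel_left, norm_smul, Real.norm_of_nonneg hs.1.le]
    have hgap : f' (x + s • d) d - f' x d ≤ L * (s * ‖d‖) * ‖d‖ := calc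
      f' (x + s • d) d - f' x d ≤ ‖(f' (x + s • d) - f' x) d‖ := Real.le_norm_self _
      _ ≤ ‖f' (x + s • d) - f' x‖ * ‖d‖ := ContinuousLinearMap.le_opNorm _ _
      _ ≤ L * (s * ‖d‖) * ‖d‖ := by
        gcongr; rw [← hnorm]; exact hL _ hz
    linear_combination hgap
  have h01 := hanti (left_mem_Icc.2 zero_le_one) (right_mem_Icc.2 zero_le_one) zero_le_one
  simp only [ψ, d, zero_smul, one_smul, add_zero, add_sub_cancel] at h01
  linear_combination h01

end Segment

section Blocks

variable {E F : Type*} [NormedAddCommGroup E] [NormedSpace ℝ E]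
  [NormedAddCommGroup F] [NormedSpace ℝ F] {S₁ : Set E} {S₂ : Set F}

lemma HasFDerivWithinAt.comp_prodMk_left {f : E × F → ℝ} {D : E × F →L[ℝ] ℝ} {x₁ : E} {x₂ : F}
    (hf : HasFDerivWithinAt f D (S₁ ×ˢ S₂) (x₁, x₂)) (hx₂ : x₂ ∈ S₂) :
    HasFDerivWithinAt (fun y₁ => f (y₁, x₂)) (D.comp (ContinuousLinearMap.inl ℝ E F)) S₁ x₁ :=
  hf.comp x₁ (hasFDerivAt_prodMk_left x₁ x₂).hasFDerivWithinAt fun _ hy₁ => mk_mem_prod hy₁ hx₂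

lemma HasFDerivWithinAt.comp_prodMk_right {f : E × F → ℝ} {D : E × F →L[ℝ] ℝ} {x₁ : E} {x₂ : F}
    (hf : HasFDerivWithinAt f D (S₁ ×ˢ S₂) (x₁, x₂)) (hx₁ : x₁ ∈ S₁) :
    HasFDerivWithinAt (fun y₂ => f (x₁, y₂)) (D.comp (ContinuousLinearMap.inr ℝ E F)) S₂ x₂ :=
  hf.comp x₂ (hasFDerivAt_prodMk_right x₁ x₂).hasFDerivWithinAt fun _ hy₂ => mk_mem_prod hx₁ hy₂

variable {f : E × F → ℝ} {Df : E × F → (E × F) →L[ℝ] ℝ} {g₁ : E → ℝ} {g₂ : F → ℝ} {L₁ : ℝ}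
  {p q : E × F}

lemma objFun_fst_segment_le (hg₁ : ConvexOn ℝ S₁ g₁) (hg₂ : ConvexOn ℝ S₂ g₂)
    (hf : ConvexOn ℝ (S₁ ×ˢ S₂) f)
    (hDf : ∀ x ∈ S₁ ×ˢ S₂, HasFDerivWithinAt f (Df x) (S₁ ×ˢ S₂) x)
    (hlip₁ : ∀ x₁ ∈ S₁, ∀ x₂ ∈ S₂, ∀ h₁ : E, x₁ + h₁ ∈ S₁ →
      ‖(Df (x₁ + h₁, x₂)).comp (ContinuousLinearMap.inl ℝ E F) -
        (Df (x₁, x₂)).comp (ContinuousLinearMap.inl ℝ E F)‖ ≤ L₁ * ‖h₁‖)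
    (hp : p ∈ S₁ ×ˢ S₂) (hq : q ∈ S₁ ×ˢ S₂)
    (hp₂ : ∀ y₂ ∈ S₂, objFun f g₁ g₂ p ≤ objFun f g₁ g₂ (p.1, y₂))
    {t : ℝ} (ht : t ∈ Icc (0 : ℝ) 1) :
    objFun f g₁ g₂ (p.1 + t • (q.1 - p.1), p.2) ≤ objFun f g₁ g₂ p +
      t * (objFun f g₁ g₂ q - objFun f g₁ g₂ p) + L₁ / 2 * t ^ 2 * ‖q.1 - p.1‖ ^ 2 := by
  obtain ⟨hp₁, hp₂S⟩ := hp
  obtain ⟨hq₁, hq₂⟩ := hq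
  set d := q.1 - p.1
  have hdescent : f (p.1 + t • d, p.2) ≤ f p + t * Df p (d, 0) + L₁ / 2 * t ^ 2 * ‖d‖ ^ 2 := by
    have h := hg₁.1.apply_le_tangent_add_sq
      (f' := fun z => (Df (z, p.2)).comp (ContinuousLinearMap.inl ℝ E F))
      (fun z hz => (hDf (z, p.2) ⟨hz, hp₂S⟩).comp_prodMk_left hp₂S)
      (fun z hz => by simpa using hlip₁ p.1 hp₁ p.2 hp₂S (z - p.1) (by simpa using hz))
      hp₁ (hg₁.1.add_smul_sub_mem hp₁ hq₁ ht)
    rw [add_sub_cancel_left, map_smul, smul_eq_mul, ContinuousLinearMap.comp_apply,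
      ContinuousLinearMap.inl_apply, Prod.mk.eta, norm_smul, Real.norm_of_nonneg ht.1] at h
    linear_combination h
  have hgradient : f p + Df p (q - p) ≤ f q :=
    hf.add_fderiv_le (hDf p ⟨hp₁, hp₂S⟩) ⟨hp₁, hp₂S⟩ ⟨hq₁, hq₂⟩
  have hoptimal : g₂ p.2 - g₂ q.2 ≤ Df p (0, q.2 - p.2) := by
    have hmin : IsMinOn (fun y₂ => f (p.1, y₂) + g₂ y₂) S₂ p.2 := isMinOn_iff.2 fun y₂ hy₂ => by
      have h := hp₂ y₂ hy₂
      simp only [objFun] at h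
      linarith
    simpa using hmin.sub_le_fderiv_of_convexOn hg₂
      ((hDf p ⟨hp₁, hp₂S⟩).comp_prodMk_right hp₁) hp₂S hq₂
  have hsplit : Df p (q - p) = Df p (d, 0) + Df p (0, q.2 - p.2) := by
    rw [← map_add]; congr 1; ext <;> simp [d]
  have hg₁t := hg₁.apply_add_smul_sub_le hp₁ hq₁ ht
  have hslope : t * Df p (d, 0) ≤ t * (f q - f p + g₂ q.2 - g₂ p.2) :=
    mul_le_mul_of_nonneg_left (by linarith) ht.1
  simp only [objFun]
  linarith

lemma objFun_half_step_le (hg₁ : ConvexOn ℝ S₁ g₁) (hg₂ : ConvexOn ℝ S₂ g₂)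
    (hf : ConvexOn ℝ (S₁ ×ˢ S₂) f)
    (hDf : ∀ x ∈ S₁ ×ˢ S₂, HasFDerivWithinAt f (Df x) (S₁ ×ˢ S₂) x)
    (hlip₁ : ∀ x₁ ∈ S₁, ∀ x₂ ∈ S₂, ∀ h₁ : E, x₁ + h₁ ∈ S₁ →
      ‖(Df (x₁ + h₁, x₂)).comp (ContinuousLinearMap.inl ℝ E F) -
        (Df (x₁, x₂)).comp (ContinuousLinearMap.inl ℝ E F)‖ ≤ L₁ * ‖h₁‖)
    (hp : p ∈ S₁ ×ˢ S₂) (hq : q ∈ S₁ ×ˢ S₂)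
    (hp₂ : ∀ y₂ ∈ S₂, objFun f g₁ g₂ p ≤ objFun f g₁ g₂ (p.1, y₂))
    (hL₁ : 0 < L₁) {μ : ℝ} (hμ : 0 ≤ μ) (hμL₁ : μ ≤ 4 * L₁)
    (hgrowth : μ / 2 * ‖q.1 - p.1‖ ^ 2 ≤ objFun f g₁ g₂ p - objFun f g₁ g₂ q)
    {x₁ : E} (hx₁ : ∀ y₁ ∈ S₁, objFun f g₁ g₂ (x₁, p.2) ≤ objFun f g₁ g₂ (y₁, p.2)) :
    objFun f g₁ g₂ (x₁, p.2) - objFun f g₁ g₂ q ≤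
      (1 - μ / (8 * L₁)) * (objFun f g₁ g₂ p - objFun f g₁ g₂ q) := by
  set t := μ / (4 * L₁)
  have ht : t ∈ Icc (0 : ℝ) 1 := ⟨by positivity, (div_le_one (by positivity)).2 hμL₁⟩
  have htrial := objFun_fst_segment_le hg₁ hg₂ hf hDf hlip₁ hp hq hp₂ ht
  have hx₁_le_trial := hx₁ _ (hg₁.1.add_smul_sub_mem hp.1 hq.1 ht)
  have hgap : 0 ≤ objFun f g₁ g₂ p - objFun f g₁ g₂ q :=
    le_trans (by positivity) hgrowth
  have hquad : L₁ / 2 * t ^ 2 * ‖q.1 - p.1‖ ^ 2 ≤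
      t / 4 * (objFun f g₁ g₂ p - objFun f g₁ g₂ q) := calc
    L₁ / 2 * t ^ 2 * ‖q.1 - p.1‖ ^ 2 = t / 4 * (μ / 2 * ‖q.1 - p.1‖ ^ 2) := by
      simp only [t]; field_simp
    _ ≤ t / 4 * (objFun f g₁ g₂ p - objFun f g₁ g₂ q) := by gcongr
  have ht_half : μ / (8 * L₁) = t / 2 := by simp only [t]; field_simp; ring
  rw [ht_half]
  linarith [mul_nonneg ht.1 hgap]

end Blocks

theorem stmt6_general
    {B₁ B₂ : Type*}
    [NormedAddCommGroup B₁] [NormedSpace ℝ B₁]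
    [NormedAddCommGroup B₂] [NormedSpace ℝ B₂]
    (f : B₁ × B₂ → ℝ) (Df : B₁ × B₂ → (B₁ × B₂) →L[ℝ] ℝ)
    (g₁ : B₁ → ℝ) (g₂ : B₂ → ℝ) (S₁ : Set B₁) (S₂ : Set B₂)
    -- (P3): g₁, g₂ proper convex, subdifferentiable on their domains
    (hg₁conv : ConvexOn ℝ S₁ g₁) (hg₂conv : ConvexOn ℝ S₂ g₂)
    -- (P4): f convex and Fréchet differentiable on dom g₁ × dom g₂, with derivative Df
    (hfconv : ConvexOn ℝ (S₁ ×ˢ S₂) f)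
    (hfdiff : ∀ x ∈ S₁ ×ˢ S₂, HasFDerivWithinAt f (Df x) (S₁ ×ˢ S₂) x)
    -- (P2): a norm `N` on the product space and the constants β₁, β₂
    (N : B₁ × B₂ → ℝ) (β₁ : ℝ) (hβ₁ : 0 ≤ β₁)
    (hN₁ : ∀ z : B₁ × B₂, β₁ * ‖z.1‖ ^ 2 ≤ N z ^ 2)
    -- (P5): Lipschitz continuity of the first partial derivative, with finite L₁ > 0
    (L₁ : ℝ) (hL₁pos : 0 < L₁)
    (hlip₁ : ∀ x₁ ∈ S₁, ∀ x₂ ∈ S₂, ∀ h₁ : B₁, x₁ + h₁ ∈ S₁ →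
      ‖(Df (x₁ + h₁, x₂)).comp (ContinuousLinearMap.inl ℝ B₁ B₂) -
        (Df (x₁, x₂)).comp (ContinuousLinearMap.inl ℝ B₁ B₂)‖ ≤ L₁ * ‖h₁‖)
    -- (P6): nonempty optimal set X with optimal value H*
    (X : Set (B₁ × B₂))
    (hX : X = {y ∈ S₁ ×ˢ S₂ | ∀ z ∈ S₁ ×ˢ S₂, objFun f g₁ g₂ y ≤ objFun f g₁ g₂ z})
    (Hstar : ℝ) (hHstar : ∀ y ∈ X, objFun f g₁ g₂ y = Hstar)
    -- projections onto X with respect to N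
    (proj : B₁ × B₂ → B₁ × B₂)
    (hproj : ∀ z ∈ S₁ ×ˢ S₂, proj z ∈ X ∧ ∀ y ∈ X, N (z - proj z) ≤ N (z - y))
    -- (P8b): quadratic functional growth of H with modulus κ > 0
    (κ : ℝ) (hκ : 0 < κ)
    (hqg : ∀ z ∈ S₁ ×ˢ S₂,
      κ / 2 * N (z - proj z) ^ 2 ≤ objFun f g₁ g₂ z - Hstar)
    (hκβ₁ : κ * β₁ ≤ 4 * L₁)
    -- the alternating minimization sequence
    (x : ℕ → B₁ × B₂)
    (hx0 : x 0 ∈ S₁ ×ˢ S₂)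
    (hinit : ∀ y₂ ∈ S₂, objFun f g₁ g₂ (x 0) ≤ objFun f g₁ g₂ ((x 0).1, y₂))
    (hstep1 : ∀ k : ℕ, (x (k + 1)).1 ∈ S₁ ∧ ∀ y₁ ∈ S₁,
      objFun f g₁ g₂ ((x (k + 1)).1, (x k).2) ≤ objFun f g₁ g₂ (y₁, (x k).2))
    (hstep2 : ∀ k : ℕ, (x (k + 1)).2 ∈ S₂ ∧ ∀ y₂ ∈ S₂,
      objFun f g₁ g₂ (x (k + 1)) ≤ objFun f g₁ g₂ ((x (k + 1)).1, y₂)) :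
    ∀ k : ℕ,
      objFun f g₁ g₂ ((x (k + 1)).1, (x k).2) - Hstar ≤
        (1 - κ * β₁ / (8 * L₁)) * (objFun f g₁ g₂ (x k) - Hstar) := by
  intro k
  have hmem : ∀ j, x j ∈ S₁ ×ˢ S₂
    | 0 => hx0
    | n + 1 => ⟨(hstep1 n).1, (hstep2 n).1⟩
  have hmin₂ : ∀ y₂ ∈ S₂, objFun f g₁ g₂ (x k) ≤ objFun f g₁ g₂ ((x k).1, y₂) := by
    cases k with
    | zero => exact hinit
    | succ n => exact (hstep2 n).2
  obtain ⟨hproj_mem, -⟩ := hproj (x k) (hmem k)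
  have hproj_feasible : proj (x k) ∈ S₁ ×ˢ S₂ := by
    rw [hX] at hproj_mem
    exact hproj_mem.1
  have hgrowth : κ * β₁ / 2 * ‖(proj (x k)).1 - (x k).1‖ ^ 2 ≤ objFun f g₁ g₂ (x k) - Hstar := by
    have hN := hN₁ (x k - proj (x k))
    rw [Prod.fst_sub, norm_sub_rev] at hN
    linarith [mul_le_mul_of_nonneg_left hN hκ.le, hqg (x k) (hmem k)]
  rw [← hHstar _ hproj_mem] at hgrowth ⊢
  exact objFun_half_step_le hg₁conv hg₂conv hfconv hfdiff hlip₁ (hmem k) hproj_feasible hmin₂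
    hL₁pos (by positivity) hκβ₁ hgrowth (hstep1 k).2

/-- contraction of the half-step of alternating minimization under
quadratic functional growth: for every `k ≥ 0`,
`H^{k+1/2} - H* ≤ (1 - κβ₁/(8L₁)) (H^k - H*)`, where `H^{k+1/2} = H(x₁^{k+1}, x₂^k)`. -/
theorem stmt6
    {B₁ B₂ : Type*}
    [NormedAddCommGroup B₁] [NormedSpace ℝ B₁] [CompleteSpace B₁]
    [NormedAddCommGroup B₂] [NormedSpace ℝ B₂] [CompleteSpace B₂]
    (f : B₁ × B₂ → ℝ) (Df : B₁ × B₂ → (B₁ × B₂) →L[ℝ] ℝ)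
    (g₁ : B₁ → ℝ) (g₂ : B₂ → ℝ) (S₁ : Set B₁) (S₂ : Set B₂)
    -- (P3): g₁, g₂ proper convex, subdifferentiable on their domains
    (hS₁c : Convex ℝ S₁) (hS₂c : Convex ℝ S₂)
    (hS₁ne : S₁.Nonempty) (hS₂ne : S₂.Nonempty)
    (hg₁conv : ConvexOn ℝ S₁ g₁) (hg₂conv : ConvexOn ℝ S₂ g₂)
    (hg₁sub : ∀ x₁ ∈ S₁, ∃ d : B₁ →L[ℝ] ℝ, ∀ y₁ ∈ S₁, g₁ x₁ + d (y₁ - x₁) ≤ g₁ y₁)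
    (hg₂sub : ∀ x₂ ∈ S₂, ∃ d : B₂ →L[ℝ] ℝ, ∀ y₂ ∈ S₂, g₂ x₂ + d (y₂ - x₂) ≤ g₂ y₂)
    -- (P4): f convex and Fréchet differentiable on dom g₁ × dom g₂, with derivative Df
    (hfconv : ConvexOn ℝ (S₁ ×ˢ S₂) f)
    (hfdiff : ∀ x ∈ S₁ ×ˢ S₂, HasFDerivWithinAt f (Df x) (S₁ ×ˢ S₂) x)
    -- (P2): a norm `N` on the product space and the constants β₁, β₂
    (N : B₁ × B₂ → ℝ) (β₁ : ℝ) (hβ₁ : 0 ≤ β₁)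
    (hNnonneg : ∀ z : B₁ × B₂, 0 ≤ N z)
    (hN₁ : ∀ z : B₁ × B₂, β₁ * ‖z.1‖ ^ 2 ≤ N z ^ 2)
    -- (P5): Lipschitz continuity of the first partial derivative, with finite L₁ > 0
    (L₁ : ℝ) (hL₁pos : 0 < L₁)
    (hlip₁ : ∀ x₁ ∈ S₁, ∀ x₂ ∈ S₂, ∀ h₁ : B₁, x₁ + h₁ ∈ S₁ →
      ‖(Df (x₁ + h₁, x₂)).comp (ContinuousLinearMap.inl ℝ B₁ B₂) -
        (Df (x₁, x₂)).comp (ContinuousLinearMap.inl ℝ B₁ B₂)‖ ≤ L₁ * ‖h₁‖)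
    -- (P6): nonempty optimal set X with optimal value H*
    (X : Set (B₁ × B₂))
    (hX : X = {y ∈ S₁ ×ˢ S₂ | ∀ z ∈ S₁ ×ˢ S₂, objFun f g₁ g₂ y ≤ objFun f g₁ g₂ z})
    (hXne : X.Nonempty)
    (Hstar : ℝ) (hHstar : ∀ y ∈ X, objFun f g₁ g₂ y = Hstar)
    -- projections onto X with respect to N
    (proj : B₁ × B₂ → B₁ × B₂)
    (hproj : ∀ z ∈ S₁ ×ˢ S₂, proj z ∈ X ∧ ∀ y ∈ X, N (z - proj z) ≤ N (z - y))
    -- (P8b): quadratic functional growth of H with modulus κ > 0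
    (κ : ℝ) (hκ : 0 < κ)
    (hqg : ∀ z ∈ S₁ ×ˢ S₂,
      κ / 2 * N (z - proj z) ^ 2 ≤ objFun f g₁ g₂ z - Hstar)
    (hκβ₁ : κ * β₁ ≤ 4 * L₁)
    -- the alternating minimization sequence
    (x : ℕ → B₁ × B₂)
    (hx0 : x 0 ∈ S₁ ×ˢ S₂)
    (hinit : ∀ y₂ ∈ S₂, objFun f g₁ g₂ (x 0) ≤ objFun f g₁ g₂ ((x 0).1, y₂))
    (hstep1 : ∀ k : ℕ, (x (k + 1)).1 ∈ S₁ ∧ ∀ y₁ ∈ S₁,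
      objFun f g₁ g₂ ((x (k + 1)).1, (x k).2) ≤ objFun f g₁ g₂ (y₁, (x k).2))
    (hstep2 : ∀ k : ℕ, (x (k + 1)).2 ∈ S₂ ∧ ∀ y₂ ∈ S₂,
      objFun f g₁ g₂ (x (k + 1)) ≤ objFun f g₁ g₂ ((x (k + 1)).1, y₂)) :
    ∀ k : ℕ,
      objFun f g₁ g₂ ((x (k + 1)).1, (x k).2) - Hstar ≤
        (1 - κ * β₁ / (8 * L₁)) * (objFun f g₁ g₂ (x k) - Hstar) :=
  stmt6_general f Df g₁ g₂ S₁ S₂ hg₁conv hg₂conv hfconv hfdiff N β₁ hβ₁ hN₁ L₁ hL₁pos hlip₁ X hX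
    Hstar hHstar proj hproj κ hκ hqg hκβ₁ x hx0 hinit hstep1 hstep2
end

section
/- Let k ≥ 0, let x^k = (x₁^k, x₂^k) be the k-th alternating minimization iterate, and let x̄^k = (x̄₁^k, x̄₂^k) be its projection onto the optimal set X. Then for every γ ∈ (0,1]: H^k − H* ≤ (L₁/β₁) γ ‖x^k − x̄^k‖² + (1/γ)[ H(x₁^k, x₂^k) − H(x₁^k + γ(x̄₁^k − x₁^k), x₂^k) ]. -/
open Set

/-!
Let `p` be the projection of `x = xᵏ` onto `X` and `d = p₁ - x₁`. Convexity of `f` gives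
`H(x) - H* ≤ ⟨∇f(x), x - p⟩ + g₁(x₁) - g₁(p₁) + g₂(x₂) - g₂(p₂)`, and since `x₂` minimizes
`H(x₁, ·)`, the first-order condition for the composite `f(x₁, ·) + g₂` absorbs the second-block
terms, leaving `H(x) - H* ≤ g₁(x₁) - g₁(p₁) - ⟨∇₁f(x), d⟩`. Along the first block, the mean value
inequality for the `L₁`-Lipschitz partial gradient and convexity of `g₁` show that the step
`x₁ ↦ x₁ + γd` decreases `H` by at least `γ` times that bound minus `L₁γ²‖d‖²`. Dividing by `γ`
and using `β₁‖d‖² ≤ ‖x - p‖²` gives the estimate.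
-/

section FirstOrder

variable {E : Type*} [NormedAddCommGroup E] [NormedSpace ℝ E]

theorem HasFDerivWithinAt.le_apply_sub_of_forall_add_mul_le {f : E → ℝ} {D : E →L[ℝ] ℝ}
    {s : Set E} {x z : E} {c : ℝ} (hf : HasFDerivWithinAt f D s x) (hs : segment ℝ x z ⊆ s)
    (hc : ∀ t ∈ Icc (0 : ℝ) 1, f x + t * c ≤ f (x + t • (z - x))) : c ≤ D (z - x) := by
  have hline : HasDerivWithinAt (fun t : ℝ => x + t • (z - x)) (z - x) (Icc 0 1) 0 := by
    simpa using (((hasDerivAt_id (0 : ℝ)).smul_const (z - x)).const_add x).hasDerivWithinAt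
  have hmaps : MapsTo (fun t : ℝ => x + t • (z - x)) (Icc 0 1) s := fun t ht =>
    hs (segment_eq_image' ℝ x z ▸ mem_image_of_mem _ ht)
  have hderiv : HasDerivWithinAt (fun t => f (x + t • (z - x)) - t * c) (D (z - x) - c)
      (Icc 0 1) 0 :=
    (hf.comp_hasDerivWithinAt_of_eq 0 hline hmaps (by simp)).sub
      (hasDerivAt_mul_const c).hasDerivWithinAt
  have hmin : IsMinOn (fun t => f (x + t • (z - x)) - t * c) (Icc 0 1) 0 := fun t ht => by
    simp only [mem_ofPred_eq, zero_smul, add_zero, zero_mul, sub_zero]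
    linarith [hc t ht]
  have hone : (1 : ℝ) ∈ posTangentConeAt (Icc (0 : ℝ) 1) 0 :=
    mem_posTangentConeAt_of_segment_subset (by simp [segment_eq_Icc])
  have := hmin.localize.hasFDerivWithinAt_nonneg hderiv.hasFDerivWithinAt hone
  rw [ContinuousLinearMap.toSpanSingleton_apply, one_smul] at this
  linarith

theorem ConvexOn.apply_add_apply_sub_le_of_hasFDerivWithinAt {f : E → ℝ} {D : E →L[ℝ] ℝ}
    {s : Set E} {x z : E} (hconv : ConvexOn ℝ s f) (hf : HasFDerivWithinAt f D s x)
    (hx : x ∈ s) (hz : z ∈ s) : f x + D (z - x) ≤ f z := by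
  have := hf.neg.le_apply_sub_of_forall_add_mul_le (hconv.1.segment_subset hx hz)
    (c := f x - f z) fun t ht => by
      have hcomb : x + t • (z - x) = (1 - t) • x + t • z := by module
      have := hconv.2 hx hz (sub_nonneg.2 ht.2) ht.1 (sub_add_cancel 1 t)
      rw [hcomb, Pi.neg_apply, Pi.neg_apply]
      simp only [smul_eq_mul] at this
      linarith
  simp only [neg_apply] at this
  linarith

theorem ConvexOn.sub_le_apply_sub_of_isMinOn_add {f g : E → ℝ} {D : E →L[ℝ] ℝ}
    {s : Set E} {x z : E} (hg : ConvexOn ℝ s g) (hf : HasFDerivWithinAt f D s x)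
    (hmin : IsMinOn (f + g) s x) (hx : x ∈ s) (hz : z ∈ s) : g x - g z ≤ D (z - x) :=
  hf.le_apply_sub_of_forall_add_mul_le (hg.1.segment_subset hx hz) fun t ht => by
    have hcomb : x + t • (z - x) = (1 - t) • x + t • z := by module
    have hconv := hg.2 hx hz (sub_nonneg.2 ht.2) ht.1 (sub_add_cancel 1 t)
    have hle := hmin (hg.1.add_smul_sub_mem hx hz ht)
    rw [hcomb] at hle ⊢
    simp only [mem_ofPred_eq, Pi.add_apply, smul_eq_mul] at hle hconv
    linarith

theorem le_add_fderiv_add_mul_sq_of_lipschitz {φ : E → ℝ} {φ' : E → E →L[ℝ] ℝ} {s : Set E}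
    {x y : E} {L : ℝ} (hL : 0 ≤ L) (hφ : ∀ z ∈ s, HasFDerivWithinAt φ (φ' z) s z)
    (hs : segment ℝ x y ⊆ s) (hlip : ∀ z ∈ segment ℝ x y, ‖φ' z - φ' x‖ ≤ L * ‖z - x‖) :
    φ y ≤ φ x + φ' x (y - x) + L * ‖y - x‖ ^ 2 := by
  have hderiv : ∀ z ∈ segment ℝ x y,
      HasFDerivWithinAt (fun w => φ w - φ' x w) (φ' z - φ' x) (segment ℝ x y) z := fun z hz =>
    ((hφ z (hs hz)).mono hs).sub (φ' x).hasFDerivWithinAt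
  have hbound : ∀ z ∈ segment ℝ x y, ‖φ' z - φ' x‖ ≤ L * ‖y - x‖ := fun z hz =>
    (hlip z hz).trans (mul_le_mul_of_nonneg_left (norm_sub_le_of_mem_segment hz) hL)
  have hmvt := (convex_segment x y).norm_image_sub_le_of_norm_hasFDerivWithin_le hderiv hbound
    (left_mem_segment ℝ x y) (right_mem_segment ℝ x y)
  rw [Real.norm_eq_abs] at hmvt
  rw [map_sub, sq]
  linarith [(abs_le.1 hmvt).2]

end FirstOrder

section BlockEstimates

variable {B₁ B₂ : Type*} [NormedAddCommGroup B₁] [NormedSpace ℝ B₁]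
  [NormedAddCommGroup B₂] [NormedSpace ℝ B₂] {f : B₁ × B₂ → ℝ} {g₁ : B₁ → ℝ} {g₂ : B₂ → ℝ}
  {S₁ : Set B₁} {S₂ : Set B₂}

theorem objFun_sub_le_of_forall_le_snd {D : (B₁ × B₂) →L[ℝ] ℝ} {x p : B₁ × B₂}
    (hf : ConvexOn ℝ (S₁ ×ˢ S₂) f) (hD : HasFDerivWithinAt f D (S₁ ×ˢ S₂) x)
    (hg₂ : ConvexOn ℝ S₂ g₂) (hx : x ∈ S₁ ×ˢ S₂) (hp : p ∈ S₁ ×ˢ S₂)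
    (hmin : ∀ y₂ ∈ S₂, objFun f g₁ g₂ x ≤ objFun f g₁ g₂ (x.1, y₂)) :
    objFun f g₁ g₂ x - objFun f g₁ g₂ p ≤ g₁ x.1 - g₁ p.1 - D (p.1 - x.1, 0) := by
  have hgrad := hf.apply_add_apply_sub_le_of_hasFDerivWithinAt hD hx hp
  have hsnd : HasFDerivWithinAt (fun y₂ => f (x.1, y₂))
      (D.comp (ContinuousLinearMap.inr ℝ B₁ B₂)) S₂ x.2 :=
    hD.comp x.2 (hasFDerivAt_prodMk_right x.1 x.2).hasFDerivWithinAt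
      fun _ hy₂ => mk_mem_prod hx.1 hy₂
  have hopt := hg₂.sub_le_apply_sub_of_isMinOn_add hsnd
    (fun y₂ hy₂ => by
      have := hmin y₂ hy₂
      simp only [objFun, mem_ofPred_eq, Pi.add_apply] at this ⊢
      linarith) hx.2 hp.2
  have hsplit : p - x = (p.1 - x.1, 0) + (0, p.2 - x.2) := by ext <;> simp
  rw [hsplit, map_add] at hgrad
  simp only [ContinuousLinearMap.comp_apply, ContinuousLinearMap.inr_apply] at hopt
  unfold objFun
  linarith

theorem objFun_add_smul_sub_fst_le {Df : B₁ × B₂ → (B₁ × B₂) →L[ℝ] ℝ} {L γ : ℝ}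
    {x : B₁ × B₂} {z₁ : B₁}
    (hf : ∀ y ∈ S₁ ×ˢ S₂, HasFDerivWithinAt f (Df y) (S₁ ×ˢ S₂) y)
    (hg₁ : ConvexOn ℝ S₁ g₁) (hL : 0 ≤ L)
    (hlip : ∀ x₁ ∈ S₁, ∀ x₂ ∈ S₂, ∀ h₁ : B₁, x₁ + h₁ ∈ S₁ →
      ‖(Df (x₁ + h₁, x₂)).comp (ContinuousLinearMap.inl ℝ B₁ B₂) -
        (Df (x₁, x₂)).comp (ContinuousLinearMap.inl ℝ B₁ B₂)‖ ≤ L * ‖h₁‖)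
    (hx : x ∈ S₁ ×ˢ S₂) (hz₁ : z₁ ∈ S₁) (hγ : γ ∈ Icc (0 : ℝ) 1) :
    objFun f g₁ g₂ (x.1 + γ • (z₁ - x.1), x.2) ≤
      objFun f g₁ g₂ x + γ * (Df x (z₁ - x.1, 0) + g₁ z₁ - g₁ x.1) +
        L * γ ^ 2 * ‖z₁ - x.1‖ ^ 2 := by
  have hseg : segment ℝ x.1 (x.1 + γ • (z₁ - x.1)) ⊆ S₁ :=
    hg₁.1.segment_subset hx.1 (hg₁.1.add_smul_sub_mem hx.1 hz₁ hγ)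
  have hfst : ∀ w ∈ S₁, HasFDerivWithinAt (fun w => f (w, x.2))
      ((Df (w, x.2)).comp (ContinuousLinearMap.inl ℝ B₁ B₂)) S₁ w := fun w hw =>
    (hf (w, x.2) (mk_mem_prod hw hx.2)).comp w (hasFDerivAt_prodMk_left w x.2).hasFDerivWithinAt
      fun _ hv => mk_mem_prod hv hx.2
  have hdesc := le_add_fderiv_add_mul_sq_of_lipschitz hL hfst hseg fun w hw => by
    simpa using hlip x.1 hx.1 x.2 hx.2 (w - x.1) (by simpa using hseg hw)
  have hg := hg₁.2 hx.1 hz₁ (sub_nonneg.2 hγ.2) hγ.1 (sub_add_cancel 1 γ)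
  have hcomb : x.1 + γ • (z₁ - x.1) = (1 - γ) • x.1 + γ • z₁ := by module
  rw [add_sub_cancel_left, norm_smul, Real.norm_of_nonneg hγ.1] at hdesc
  simp only [ContinuousLinearMap.comp_apply, ContinuousLinearMap.inl_apply, Prod.mk.eta,
    map_smul, smul_eq_mul] at hdesc hg
  rw [← hcomb] at hg
  rw [mul_pow] at hdesc
  unfold objFun
  linarith

end BlockEstimates

theorem stmt8_general
    {B₁ B₂ : Type*}
    [NormedAddCommGroup B₁] [NormedSpace ℝ B₁]
    [NormedAddCommGroup B₂] [NormedSpace ℝ B₂]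
    (f : B₁ × B₂ → ℝ) (Df : B₁ × B₂ → (B₁ × B₂) →L[ℝ] ℝ)
    (g₁ : B₁ → ℝ) (g₂ : B₂ → ℝ) (S₁ : Set B₁) (S₂ : Set B₂)
    -- (P3): g₁, g₂ proper convex, subdifferentiable on their domains
    (hg₁conv : ConvexOn ℝ S₁ g₁) (hg₂conv : ConvexOn ℝ S₂ g₂)
    -- (P4): f convex and Fréchet differentiable on dom g₁ × dom g₂, with derivative Df
    (hfconv : ConvexOn ℝ (S₁ ×ˢ S₂) f)
    (hfdiff : ∀ x ∈ S₁ ×ˢ S₂, HasFDerivWithinAt f (Df x) (S₁ ×ˢ S₂) x)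
    -- (P2): a norm `N` on the product space and the constants β₁, β₂
    (N : B₁ × B₂ → ℝ) (β₁ : ℝ) (hβ₁ : 0 < β₁)
    (hN₁ : ∀ z : B₁ × B₂, β₁ * ‖z.1‖ ^ 2 ≤ N z ^ 2)
    -- (P5): Lipschitz continuity of the first partial derivative, with finite L₁ > 0
    (L₁ : ℝ) (hL₁pos : 0 < L₁)
    (hlip₁ : ∀ x₁ ∈ S₁, ∀ x₂ ∈ S₂, ∀ h₁ : B₁, x₁ + h₁ ∈ S₁ →
      ‖(Df (x₁ + h₁, x₂)).comp (ContinuousLinearMap.inl ℝ B₁ B₂) -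
        (Df (x₁, x₂)).comp (ContinuousLinearMap.inl ℝ B₁ B₂)‖ ≤ L₁ * ‖h₁‖)
    -- (P6): nonempty optimal set X with optimal value H*
    (X : Set (B₁ × B₂))
    (hX : X = {y ∈ S₁ ×ˢ S₂ | ∀ z ∈ S₁ ×ˢ S₂, objFun f g₁ g₂ y ≤ objFun f g₁ g₂ z})
    (Hstar : ℝ) (hHstar : ∀ y ∈ X, objFun f g₁ g₂ y = Hstar)
    -- projections onto X with respect to N
    (proj : B₁ × B₂ → B₁ × B₂)
    (hproj : ∀ z ∈ S₁ ×ˢ S₂, proj z ∈ X ∧ ∀ y ∈ X, N (z - proj z) ≤ N (z - y))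
    -- the alternating minimization sequence
    (x : ℕ → B₁ × B₂)
    (hx0 : x 0 ∈ S₁ ×ˢ S₂)
    (hinit : ∀ y₂ ∈ S₂, objFun f g₁ g₂ (x 0) ≤ objFun f g₁ g₂ ((x 0).1, y₂))
    (hstep1 : ∀ k : ℕ, (x (k + 1)).1 ∈ S₁ ∧ ∀ y₁ ∈ S₁,
      objFun f g₁ g₂ ((x (k + 1)).1, (x k).2) ≤ objFun f g₁ g₂ (y₁, (x k).2))
    (hstep2 : ∀ k : ℕ, (x (k + 1)).2 ∈ S₂ ∧ ∀ y₂ ∈ S₂,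
      objFun f g₁ g₂ (x (k + 1)) ≤ objFun f g₁ g₂ ((x (k + 1)).1, y₂)) :
    ∀ k : ℕ,
      ∀ γ : ℝ, 0 < γ → γ ≤ 1 →
      objFun f g₁ g₂ (x k) - Hstar ≤
        L₁ / β₁ * γ * N (x k - proj (x k)) ^ 2 +
          1 / γ * (objFun f g₁ g₂ (x k) -
            objFun f g₁ g₂ ((x k).1 + γ • ((proj (x k)).1 - (x k).1), (x k).2)) := by
  intro k γ hγ₀ hγ₁
  obtain ⟨hxk, hmin₂⟩ : x k ∈ S₁ ×ˢ S₂ ∧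
      ∀ y₂ ∈ S₂, objFun f g₁ g₂ (x k) ≤ objFun f g₁ g₂ ((x k).1, y₂) := by
    cases k with
    | zero => exact ⟨hx0, hinit⟩
    | succ k => exact ⟨mk_mem_prod (hstep1 k).1 (hstep2 k).1, (hstep2 k).2⟩
  set p := proj (x k)
  have hpX : p ∈ X := (hproj (x k) hxk).1
  have hp : p ∈ S₁ ×ˢ S₂ := by rw [hX] at hpX; exact hpX.1
  have hgap := objFun_sub_le_of_forall_le_snd hfconv (hfdiff _ hxk) hg₂conv hxk hp hmin₂
  have hdesc := objFun_add_smul_sub_fst_le (g₂ := g₂) hfdiff hg₁conv hL₁pos.le hlip₁ hxk hp.1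
    ⟨hγ₀.le, hγ₁⟩
  have hN : β₁ * ‖p.1 - (x k).1‖ ^ 2 ≤ N (x k - p) ^ 2 := by
    simpa [norm_sub_rev] using hN₁ (x k - p)
  rw [hHstar p hpX] at hgap
  have hdecrease : g₁ (x k).1 - g₁ p.1 - Df (x k) (p.1 - (x k).1, 0) -
        L₁ * γ * ‖p.1 - (x k).1‖ ^ 2 ≤
      1 / γ * (objFun f g₁ g₂ (x k) -
        objFun f g₁ g₂ ((x k).1 + γ • (p.1 - (x k).1), (x k).2)) := by
    rw [one_div_mul_eq_div, le_div_iff₀ hγ₀]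
    linarith
  have hnorm : L₁ * γ * ‖p.1 - (x k).1‖ ^ 2 ≤ L₁ / β₁ * γ * N (x k - p) ^ 2 := by
    rw [div_mul_eq_mul_div, div_mul_eq_mul_div, le_div_iff₀ hβ₁]
    nlinarith [mul_le_mul_of_nonneg_left hN (mul_nonneg hL₁pos.le hγ₀.le)]
  linarith

/-- key estimate along the first block for the iterates: for every
`k ≥ 0`, with `x̄^k` the projection of the iterate `x^k` onto the optimal set `X`,
and for every `γ ∈ (0,1]`,
`H^k - H* ≤ (L₁/β₁) γ ‖x^k - x̄^k‖² + (1/γ)[ H(x₁^k,x₂^k) - H(x₁^k + γ(x̄₁^k - x₁^k), x₂^k) ]`. -/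
theorem stmt8
    {B₁ B₂ : Type*}
    [NormedAddCommGroup B₁] [NormedSpace ℝ B₁] [CompleteSpace B₁]
    [NormedAddCommGroup B₂] [NormedSpace ℝ B₂] [CompleteSpace B₂]
    (f : B₁ × B₂ → ℝ) (Df : B₁ × B₂ → (B₁ × B₂) →L[ℝ] ℝ)
    (g₁ : B₁ → ℝ) (g₂ : B₂ → ℝ) (S₁ : Set B₁) (S₂ : Set B₂)
    -- (P3): g₁, g₂ proper convex, subdifferentiable on their domains
    (hS₁c : Convex ℝ S₁) (hS₂c : Convex ℝ S₂)
    (hS₁ne : S₁.Nonempty) (hS₂ne : S₂.Nonempty)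
    (hg₁conv : ConvexOn ℝ S₁ g₁) (hg₂conv : ConvexOn ℝ S₂ g₂)
    (hg₁sub : ∀ x₁ ∈ S₁, ∃ d : B₁ →L[ℝ] ℝ, ∀ y₁ ∈ S₁, g₁ x₁ + d (y₁ - x₁) ≤ g₁ y₁)
    (hg₂sub : ∀ x₂ ∈ S₂, ∃ d : B₂ →L[ℝ] ℝ, ∀ y₂ ∈ S₂, g₂ x₂ + d (y₂ - x₂) ≤ g₂ y₂)
    -- (P4): f convex and Fréchet differentiable on dom g₁ × dom g₂, with derivative Df
    (hfconv : ConvexOn ℝ (S₁ ×ˢ S₂) f)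
    (hfdiff : ∀ x ∈ S₁ ×ˢ S₂, HasFDerivWithinAt f (Df x) (S₁ ×ˢ S₂) x)
    -- (P2): a norm `N` on the product space and the constants β₁, β₂
    (N : B₁ × B₂ → ℝ) (β₁ : ℝ) (hβ₁ : 0 < β₁)
    (hNnonneg : ∀ z : B₁ × B₂, 0 ≤ N z)
    (hN₁ : ∀ z : B₁ × B₂, β₁ * ‖z.1‖ ^ 2 ≤ N z ^ 2)
    -- (P5): Lipschitz continuity of the first partial derivative, with finite L₁ > 0
    (L₁ : ℝ) (hL₁pos : 0 < L₁)
    (hlip₁ : ∀ x₁ ∈ S₁, ∀ x₂ ∈ S₂, ∀ h₁ : B₁, x₁ + h₁ ∈ S₁ →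
      ‖(Df (x₁ + h₁, x₂)).comp (ContinuousLinearMap.inl ℝ B₁ B₂) -
        (Df (x₁, x₂)).comp (ContinuousLinearMap.inl ℝ B₁ B₂)‖ ≤ L₁ * ‖h₁‖)
    -- (P6): nonempty optimal set X with optimal value H*
    (X : Set (B₁ × B₂))
    (hX : X = {y ∈ S₁ ×ˢ S₂ | ∀ z ∈ S₁ ×ˢ S₂, objFun f g₁ g₂ y ≤ objFun f g₁ g₂ z})
    (hXne : X.Nonempty)
    (Hstar : ℝ) (hHstar : ∀ y ∈ X, objFun f g₁ g₂ y = Hstar)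
    -- projections onto X with respect to N
    (proj : B₁ × B₂ → B₁ × B₂)
    (hproj : ∀ z ∈ S₁ ×ˢ S₂, proj z ∈ X ∧ ∀ y ∈ X, N (z - proj z) ≤ N (z - y))
    -- the alternating minimization sequence
    (x : ℕ → B₁ × B₂)
    (hx0 : x 0 ∈ S₁ ×ˢ S₂)
    (hinit : ∀ y₂ ∈ S₂, objFun f g₁ g₂ (x 0) ≤ objFun f g₁ g₂ ((x 0).1, y₂))
    (hstep1 : ∀ k : ℕ, (x (k + 1)).1 ∈ S₁ ∧ ∀ y₁ ∈ S₁,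
      objFun f g₁ g₂ ((x (k + 1)).1, (x k).2) ≤ objFun f g₁ g₂ (y₁, (x k).2))
    (hstep2 : ∀ k : ℕ, (x (k + 1)).2 ∈ S₂ ∧ ∀ y₂ ∈ S₂,
      objFun f g₁ g₂ (x (k + 1)) ≤ objFun f g₁ g₂ ((x (k + 1)).1, y₂)) :
    ∀ k : ℕ,
      ∀ γ : ℝ, 0 < γ → γ ≤ 1 →
      objFun f g₁ g₂ (x k) - Hstar ≤
        L₁ / β₁ * γ * N (x k - proj (x k)) ^ 2 +
          1 / γ * (objFun f g₁ g₂ (x k) -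
            objFun f g₁ g₂ ((x k).1 + γ • ((proj (x k)).1 - (x k).1), (x k).2)) :=
  stmt8_general f Df g₁ g₂ S₁ S₂ hg₁conv hg₂conv hfconv hfdiff N β₁ hβ₁ hN₁ L₁ hL₁pos hlip₁ X hX
    Hstar hHstar proj hproj x hx0 hinit hstep1 hstep2
end
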